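/- arXiv:2503.19387 — 10 statements merged into one kernel-verified Lean document; each statement's English description precedes it below -/
import Mathlib

section
/- The set S = {[[1,1],[0,0]], [[0,0],[1,1]], [[1,0],[0,0]]} of three 2×2 matrices over a field F generates M_2(F) as a unital F-algebra, but no proper subset of S generates M_2(F). -/
/-- Matrices with zero `(1,0)` entry (upper triangular). -/
def upperTriSub (F : Type*) [Field F] : Subalgebra F (Matrix (Fin 2) (Fin 2) F) where
  carrier := {M | M 1 0 = 0}
  mul_mem' := by
    intro M N hM hN
    simp only [Set.mem_setOf_eq] at *
    simp [Matrix.mul_apply, Fin.sum_univ_two, hM, hN]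
  one_mem' := by simp
  add_mem' := by
    intro M N hM hN
    simp only [Set.mem_setOf_eq] at *
    simp [hM, hN]
  zero_mem' := by simp
  algebraMap_mem' := by
    intro r
    simp [Matrix.algebraMap_matrix_apply]

/-- Matrices with zero `(0,1)` entry (lower triangular). -/
def lowerTriSub (F : Type*) [Field F] : Subalgebra F (Matrix (Fin 2) (Fin 2) F) where
  carrier := {M | M 0 1 = 0}
  mul_mem' := by
    intro M N hM hN
    simp only [Set.mem_setOf_eq] at *
    simp [Matrix.mul_apply, Fin.sum_univ_two, hM, hN]
  one_mem' := by simp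
  add_mem' := by
    intro M N hM hN
    simp only [Set.mem_setOf_eq] at *
    simp [hM, hN]
  zero_mem' := by simp
  algebraMap_mem' := by
    intro r
    simp [Matrix.algebraMap_matrix_apply]

/-- Matrices preserving the line spanned by `(1,-1)`. -/
def lineSub (F : Type*) [Field F] : Subalgebra F (Matrix (Fin 2) (Fin 2) F) where
  carrier := {M | M 0 0 - M 0 1 + M 1 0 - M 1 1 = 0}
  mul_mem' := by
    intro M N hM hN
    simp only [Set.mem_setOf_eq] at *
    simp only [Matrix.mul_apply, Fin.sum_univ_two]
    linear_combination (N 0 0 - N 0 1) * hM + (M 0 1 + M 1 1) * hN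
  one_mem' := by simp
  add_mem' := by
    intro M N hM hN
    simp only [Set.mem_setOf_eq] at *
    simp only [Matrix.add_apply]
    linear_combination hM + hN
  zero_mem' := by simp
  algebraMap_mem' := by
    intro r
    simp [Matrix.algebraMap_matrix_apply]

theorem stmt_0 (F : Type*) [Field F] :
    Algebra.adjoin F ({!![1,1;0,0], !![0,0;1,1], !![1,0;0,0]} :
        Set (Matrix (Fin 2) (Fin 2) F)) = ⊤ ∧
    ∀ T ⊂ ({!![1,1;0,0], !![0,0;1,1], !![1,0;0,0]} :
        Set (Matrix (Fin 2) (Fin 2) F)),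
      Algebra.adjoin F T ≠ ⊤ := by
  set A : Matrix (Fin 2) (Fin 2) F := !![1,1;0,0] with hAdef
  set B : Matrix (Fin 2) (Fin 2) F := !![0,0;1,1] with hBdef
  set C : Matrix (Fin 2) (Fin 2) F := !![1,0;0,0] with hCdef
  constructor
  · -- generation
    have hA : A ∈ Algebra.adjoin F ({A, B, C} : Set _) :=
      Algebra.subset_adjoin (by simp)
    have hB : B ∈ Algebra.adjoin F ({A, B, C} : Set _) :=
      Algebra.subset_adjoin (by simp)
    have hC : C ∈ Algebra.adjoin F ({A, B, C} : Set _) :=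
      Algebra.subset_adjoin (by simp)
    have e12 : (!![0,1;0,0] : Matrix (Fin 2) (Fin 2) F)
        ∈ Algebra.adjoin F ({A, B, C} : Set _) := by
      have h : (!![0,1;0,0] : Matrix (Fin 2) (Fin 2) F) = A - C := by
        ext i j
        fin_cases i <;> fin_cases j <;> simp [hAdef, hCdef]
      rw [h]; exact sub_mem hA hC
    have e21 : (!![0,0;1,0] : Matrix (Fin 2) (Fin 2) F)
        ∈ Algebra.adjoin F ({A, B, C} : Set _) := by
      have h : (!![0,0;1,0] : Matrix (Fin 2) (Fin 2) F) = B * C := by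
        ext i j
        fin_cases i <;> fin_cases j <;>
          simp [hBdef, hCdef, Matrix.mul_apply, Fin.sum_univ_two]
      rw [h]; exact mul_mem hB hC
    have e22 : (!![0,0;0,1] : Matrix (Fin 2) (Fin 2) F)
        ∈ Algebra.adjoin F ({A, B, C} : Set _) := by
      have h : (!![0,0;0,1] : Matrix (Fin 2) (Fin 2) F) = B - !![0,0;1,0] := by
        ext i j
        fin_cases i <;> fin_cases j <;> simp [hBdef]
      rw [h]; exact sub_mem hB e21
    rw [eq_top_iff]
    intro M _
    have hM : M = M 0 0 • C + M 0 1 • !![0,1;0,0] + M 1 0 • !![0,0;1,0]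
        + M 1 1 • !![0,0;0,1] := by
      ext i j
      fin_cases i <;> fin_cases j <;> simp [hCdef]
    rw [hM]
    exact add_mem (add_mem (add_mem (SMulMemClass.smul_mem _ hC)
      (SMulMemClass.smul_mem _ e12)) (SMulMemClass.smul_mem _ e21))
      (SMulMemClass.smul_mem _ e22)
  · -- irredundancy
    intro T hT
    obtain ⟨hsub, hne⟩ := Set.ssubset_iff_subset_ne.mp hT
    have hmiss : A ∉ T ∨ B ∉ T ∨ C ∉ T := by
      by_contra h
      push_neg at h
      apply hne
      apply Set.Subset.antisymm hsub
      intro x hx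
      rcases hx with h1 | h1 | h1 <;> subst h1
      · exact h.1
      · exact h.2.1
      · exact h.2.2
    have key : ∀ (S₀ : Subalgebra F (Matrix (Fin 2) (Fin 2) F)),
        T ⊆ S₀.carrier → S₀ ≠ ⊤ → Algebra.adjoin F T ≠ ⊤ := by
      intro S₀ hTS hS₀ htop
      apply hS₀
      rw [eq_top_iff, ← htop]
      exact Algebra.adjoin_le hTS
    rcases hmiss with h | h | h
    · -- A missing: T ⊆ {B, C} ⊆ lowerTriSub
      apply key (lowerTriSub F)
      · intro x hx
        have := hsub hx
        rcases this with h1 | h1 | h1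
        · exact absurd (h1 ▸ hx) h
        · show x 0 1 = 0; rw [h1, hBdef]; simp
        · show x 0 1 = 0; rw [h1, hCdef]; simp
      · intro htop
        have : (!![0,1;0,0] : Matrix (Fin 2) (Fin 2) F) ∈ lowerTriSub F := by
          rw [htop]; trivial
        have h01 : (!![(0:F),1;0,0]) 0 1 = 0 := this
        simp at h01
    · -- B missing: T ⊆ {A, C} ⊆ upperTriSub
      apply key (upperTriSub F)
      · intro x hx
        have := hsub hx
        rcases this with h1 | h1 | h1
        · show x 1 0 = 0; rw [h1, hAdef]; simp
        · exact absurd (h1 ▸ hx) h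
        · show x 1 0 = 0; rw [h1, hCdef]; simp
      · intro htop
        have : (!![0,0;1,0] : Matrix (Fin 2) (Fin 2) F) ∈ upperTriSub F := by
          rw [htop]; trivial
        have h10 : (!![(0:F),0;1,0]) 1 0 = 0 := this
        simp at h10
    · -- C missing: T ⊆ {A, B} ⊆ lineSub
      apply key (lineSub F)
      · intro x hx
        have := hsub hx
        rcases this with h1 | h1 | h1
        · show x 0 0 - x 0 1 + x 1 0 - x 1 1 = 0; rw [h1, hAdef]; simp
        · show x 0 0 - x 0 1 + x 1 0 - x 1 1 = 0; rw [h1, hBdef]; simp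
        · exact absurd (h1 ▸ hx) h
      · intro htop
        have : (!![1,0;0,0] : Matrix (Fin 2) (Fin 2) F) ∈ lineSub F := by
          rw [htop]; trivial
        have h00 : (!![(1:F),0;0,0]) 0 0 - (!![(1:F),0;0,0]) 0 1
            + (!![(1:F),0;0,0]) 1 0 - (!![(1:F),0;0,0]) 1 1 = 0 := this
        simp at h00
end

section
/- Let n > 1. A subset S of M_n(F) generates M_n(F) as a unital F-algebra if and only if S generates M_n(F) as a non-unital F-algebra. -/
/-!
Let `N` be the non-unital subalgebra generated by `S`. Multiplying an element of `N` on either side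
by a scalar or by an element of `N` stays in `N`, hence so does multiplying by anything in the unital
algebra `F[S]`. So if `F[S] = M_n(F)`, then `N` is a two-sided ideal of the simple ring `M_n(F)`,
thus `0` or everything; and `N = 0` would give `F[S] = F • 1`, which is not `M_n(F)` when `n > 1`.
-/

namespace NonUnitalSubalgebra

variable {R A : Type*} [CommRing R] [Ring A] [Algebra R A]

lemma mul_mem_of_mem_algebra_adjoin (N : NonUnitalSubalgebra R A) {x : A}
    (hx : x ∈ Algebra.adjoin R (N : Set A)) {y : A} (hy : y ∈ N) : x * y ∈ N ∧ y * x ∈ N := by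
  induction hx using Algebra.adjoin_induction generalizing y with
  | mem x hx => exact ⟨mul_mem hx hy, mul_mem hy hx⟩
  | algebraMap r =>
    rw [← Algebra.commutes, ← Algebra.smul_def]
    exact ⟨N.smul_mem r hy, N.smul_mem r hy⟩
  | add x z _ _ ihx ihz =>
    rw [add_mul, mul_add]
    exact ⟨add_mem (ihx hy).1 (ihz hy).1, add_mem (ihx hy).2 (ihz hy).2⟩
  | mul x z _ _ ihx ihz =>
    rw [mul_assoc x z y, ← mul_assoc y x z]
    exact ⟨(ihx (ihz hy).1).1, (ihz (ihx hy).2).2⟩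

def toTwoSidedIdealOfAlgebraAdjoinEqTop (N : NonUnitalSubalgebra R A)
    (hN : Algebra.adjoin R (N : Set A) = ⊤) : TwoSidedIdeal A :=
  .mk' N N.zero_mem N.add_mem (fun hx ↦ neg_mem hx)
    (fun hy ↦ (N.mul_mem_of_mem_algebra_adjoin (by simp [hN]) hy).1)
    (fun hx ↦ (N.mul_mem_of_mem_algebra_adjoin (by simp [hN]) hx).2)

@[simp]
lemma coe_toTwoSidedIdealOfAlgebraAdjoinEqTop (N : NonUnitalSubalgebra R A)
    (hN : Algebra.adjoin R (N : Set A) = ⊤) :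
    (N.toTwoSidedIdealOfAlgebraAdjoinEqTop hN : Set A) = N :=
  TwoSidedIdeal.coe_mk' ..

theorem algebra_adjoin_eq_top_iff [IsSimpleRing A] (hA : (⊥ : Subalgebra R A) ≠ ⊤)
    (N : NonUnitalSubalgebra R A) : Algebra.adjoin R (N : Set A) = ⊤ ↔ N = ⊤ := by
  refine ⟨fun hN ↦ ?_, fun hN ↦ by rw [hN, NonUnitalAlgebra.coe_top, Algebra.adjoin_univ]⟩
  have hI := N.coe_toTwoSidedIdealOfAlgebraAdjoinEqTop hN
  rcases eq_bot_or_eq_top (N.toTwoSidedIdealOfAlgebraAdjoinEqTop hN) with hbot | htop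
  · rw [hbot, TwoSidedIdeal.coe_bot] at hI
    rw [← hI, Algebra.adjoin_singleton_zero] at hN
    exact absurd hN hA
  · rw [htop, TwoSidedIdeal.coe_top, ← NonUnitalAlgebra.coe_top (R := R)] at hI
    exact SetLike.coe_injective hI.symm

end NonUnitalSubalgebra

theorem Matrix.subalgebra_bot_ne_top {ι F : Type*} [Fintype ι] [DecidableEq ι] [Field F]
    (hι : 1 < Fintype.card ι) : (⊥ : Subalgebra F (Matrix ι ι F)) ≠ ⊤ := by
  have : Nonempty ι := Fintype.card_pos_iff.mp (by omega)
  rw [Ne, Subalgebra.bot_eq_top_iff_finrank_eq_one, Module.finrank_matrix, Module.finrank_self,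
    mul_one]
  nlinarith

theorem stmt_1 (F : Type*) [Field F] (n : ℕ) (hn : 1 < n)
    (S : Set (Matrix (Fin n) (Fin n) F)) :
    Algebra.adjoin F S = ⊤ ↔ NonUnitalAlgebra.adjoin F S = ⊤ := by
  have : NeZero n := ⟨by omega⟩
  rw [← Algebra.adjoin_nonUnitalSubalgebra]
  exact NonUnitalSubalgebra.algebra_adjoin_eq_top_iff
    (Matrix.subalgebra_bot_ne_top (by simpa using hn)) _
end

section
/- Let 1 ≤ p ≤ q < n, and let a ∈ M_n(F) be a matrix not contained in the block lower-triangular subalgebra L_{q,n−q} = {[[*,0],[*,*]]} (blocks of sizes q and n−q). Identify M_{p×q}(F) with the non-unital subalgebra of M_n(F) of matrices supported in the upper-left p×q block. Then there exists x ∈ GL_n(F) such that x⟨M_{p×q} ∪ {a}⟩x^{-1} ⊇ M_{p×(q+1)} and x M_{p×q} x^{-1} = M_{p×q}. -/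
open Matrix

/-- The non-unital subalgebra of `n × n` matrices supported in the upper-left
`p × q` block, viewed as a set. -/
def blockSet (F : Type*) [Field F] (n p q : ℕ) : Set (Matrix (Fin n) (Fin n) F) :=
  {m | ∀ i j : Fin n, (p ≤ i.val ∨ q ≤ j.val) → m i j = 0}

/-- `L_{q,n-q}`: block lower-triangular matrices (top-right `q × (n-q)` block zero). -/
def lowerBlockSet (F : Type*) [Field F] (n q : ℕ) : Set (Matrix (Fin n) (Fin n) F) :=
  {m | ∀ i j : Fin n, i.val < q → q ≤ j.val → m i j = 0}

/-
Write `r` for the part of row `i` of `a` in the columns `≥ q`; since `a ∉ L_{q,n-q}`, some `r j`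
with `j ≥ q` is nonzero. For `v` supported in the first `p` rows, `v rᵀ = (v eᵢᵀ) a - v (aᵢ - r)ᵀ`
with both `v eᵢᵀ` and `v (aᵢ - r)ᵀ` in `M_{p×q}`, so the generated algebra contains all `v rᵀ`.
Take `x = 1_q ⊕ B` with `B` invertible of first row `r` (a row replacement followed by a row swap).
Then `x` commutes with `M_{p×q}`, fixes `v`, and `e_qᵀ x = rᵀ`, so `x (v rᵀ) x⁻¹ = v e_qᵀ`;
these together with `M_{p×q}` give `M_{p×(q+1)}`.
-/

namespace Matrix

variable {ι R : Type*} [Fintype ι] [DecidableEq ι]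

theorem det_updateRow_one [CommRing R] (j : ι) (r : ι → R) :
    ((1 : Matrix ι ι R).updateRow j r).det = r j := by
  have hr : ∑ k, r k • (1 : Matrix ι ι R) k = r := by
    ext l; simp [Finset.sum_apply, one_apply]
  simpa [hr] using det_updateRow_sum (1 : Matrix ι ι R) j r

theorem mul_eq_right_of_col_eq_one [NonAssocSemiring R] {S : Set ι} {x m : Matrix ι ι R}
    (hx : ∀ k t, t ∉ S → x k t = (1 : Matrix ι ι R) k t) (hm : ∀ t l, t ∈ S → m t l = 0) :
    x * m = m := by
  conv_rhs => rw [← Matrix.one_mul m]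
  ext k l
  refine Finset.sum_congr rfl fun t _ => ?_
  by_cases ht : t ∈ S
  · simp [hm t l ht]
  · simp only [hx k t ht]

theorem mul_eq_left_of_row_eq_one [NonAssocSemiring R] {S : Set ι} {x m : Matrix ι ι R}
    (hx : ∀ t l, t ∉ S → x t l = (1 : Matrix ι ι R) t l) (hm : ∀ k t, t ∈ S → m k t = 0) :
    m * x = m := by
  conv_rhs => rw [← Matrix.mul_one m]
  ext k l
  refine Finset.sum_congr rfl fun t _ => ?_
  by_cases ht : t ∈ S
  · simp [hm k t ht]
  · simp only [hx t l ht]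

theorem exists_GL_row_eq_of_isUnit [CommRing R] {S : Set ι} {r : ι → R} (hr : ∀ l ∉ S, r l = 0)
    {i₀ j : ι} (hi₀ : i₀ ∈ S) (hj : j ∈ S) (hrj : IsUnit (r j)) :
    ∃ x : GL ι R, (x : Matrix ι ι R) i₀ = r ∧
      ∀ k l, k ∉ S ∨ l ∉ S → (x : Matrix ι ι R) k l = (1 : Matrix ι ι R) k l := by
  set x := ((1 : Matrix ι ι R).updateRow j r).submatrix (Equiv.swap i₀ j) id
  have hdet : IsUnit x.det := by
    rw [det_permute, det_updateRow_one]
    exact ((Equiv.Perm.sign _).isUnit.map (Int.castRingHom R)).mul hrj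
  refine ⟨(Matrix.isUnit_iff_isUnit_det x |>.mpr hdet).unit, ?_, ?_⟩
  · ext l; simp [x]
  · intro k l hkl
    simp only [IsUnit.unit_spec, x, submatrix_apply, id, updateRow_apply, Equiv.swap_apply_def,
      one_apply]
    split_ifs <;> grind

end Matrix

section BlockSet

variable {F : Type*} [Field F] {n p q : ℕ}

theorem vecMulVec_mem_blockSet {v w : Fin n → F} (hv : ∀ k : Fin n, p ≤ k.val → v k = 0)
    (hw : ∀ l : Fin n, q ≤ l.val → w l = 0) : vecMulVec v w ∈ blockSet F n p q := by
  rintro k l (hk | hl)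
  · simp [vecMulVec_apply, hv k hk]
  · simp [vecMulVec_apply, hw l hl]

theorem sub_vecMulVec_col_mem_blockSet {m : Matrix (Fin n) (Fin n) F} (hq : q < n)
    (hm : m ∈ blockSet F n p (q + 1)) :
    m - vecMulVec (m.col ⟨q, hq⟩) (Pi.single ⟨q, hq⟩ 1) ∈ blockSet F n p q := by
  intro k l hkl
  rcases eq_or_ne l ⟨q, hq⟩ with rfl | hl
  · simp [vecMulVec_apply]
  · have hkl' : p ≤ k.val ∨ q + 1 ≤ l.val := by
      have : l.val ≠ q := fun h => hl (Fin.ext h)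
      omega
    simp [vecMulVec_apply, hm k l hkl', Pi.single_eq_of_ne hl]

theorem vecMulVec_tail_row_mem_adjoin {a : Matrix (Fin n) (Fin n) F} {i : Fin n} (hi : i.val < q)
    {v : Fin n → F} (hv : ∀ k : Fin n, p ≤ k.val → v k = 0) :
    vecMulVec v (fun l => if q ≤ l.val then a i l else 0) ∈
      NonUnitalAlgebra.adjoin F (blockSet F n p q ∪ {a}) := by
  have hsplit : vecMulVec v (fun l => if q ≤ l.val then a i l else 0) =
      vecMulVec v (Pi.single i 1) * a - vecMulVec v (fun l => if q ≤ l.val then 0 else a i l) := by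
    rw [vecMulVec_mul, single_one_vecMul]
    ext k l
    by_cases hl : q ≤ l.val <;> simp [vecMulVec_apply, hl]
  have hei : vecMulVec v (Pi.single i 1) ∈ blockSet F n p q :=
    vecMulVec_mem_blockSet hv fun l hl => Pi.single_eq_of_ne (fun h => by omega) _
  have hhead : vecMulVec v (fun l => if q ≤ l.val then 0 else a i l) ∈ blockSet F n p q :=
    vecMulVec_mem_blockSet hv fun _ hl => if_pos hl
  rw [hsplit]
  exact sub_mem (mul_mem (NonUnitalAlgebra.subset_adjoin F (.inl hei))
    (NonUnitalAlgebra.subset_adjoin F (.inr rfl))) (NonUnitalAlgebra.subset_adjoin F (.inl hhead))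

end BlockSet

theorem stmt_6_general (F : Type*) [Field F] (n p q : ℕ)
    (hpq : p ≤ q) (hq : q < n)
    (a : Matrix (Fin n) (Fin n) F) (ha : a ∉ lowerBlockSet F n q) :
    ∃ x : GL (Fin n) F,
      blockSet F n p (q + 1) ⊆
        (fun b => (x : Matrix (Fin n) (Fin n) F) * b * ((x⁻¹ : GL (Fin n) F) : Matrix (Fin n) (Fin n) F)) ''
          (NonUnitalAlgebra.adjoin F (blockSet F n p q ∪ {a}) : Set (Matrix (Fin n) (Fin n) F)) ∧
      (fun b => (x : Matrix (Fin n) (Fin n) F) * b * ((x⁻¹ : GL (Fin n) F) : Matrix (Fin n) (Fin n) F)) ''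
          blockSet F n p q = blockSet F n p q := by
  obtain ⟨i, j, hi, hj, hij⟩ : ∃ i j : Fin n, i.val < q ∧ q ≤ j.val ∧ a i j ≠ 0 := by
    simpa [lowerBlockSet] using ha
  set q₀ : Fin n := ⟨q, hq⟩
  set r : Fin n → F := fun l => if q ≤ l.val then a i l else 0
  obtain ⟨x, hxr, hx1⟩ := exists_GL_row_eq_of_isUnit (S := {l : Fin n | q ≤ l.val}) (r := r)
    (i₀ := q₀) (fun l (hl : ¬q ≤ l.val) => if_neg hl) (show q ≤ q₀.val from le_rfl) hj
    (by simpa [r, hj] using hij.isUnit)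
  have hcomm : ∀ m ∈ blockSet F n p q, (x : Matrix (Fin n) (Fin n) F) * m = m * x := by
    intro m hm
    rw [mul_eq_right_of_col_eq_one (fun k t ht => hx1 k t (.inr ht))
        (fun t l ht => hm t l (.inl (hpq.trans ht))),
      mul_eq_left_of_row_eq_one (fun t l ht => hx1 t l (.inl ht)) (fun k t ht => hm k t (.inr ht))]
  refine ⟨x, fun m hm => ?_, Set.EqOn.image_eq_self fun m hm => ?_⟩
  · have hm₁ := sub_vecMulVec_col_mem_blockSet hq hm
    have hv : ∀ k : Fin n, p ≤ k.val → m.col q₀ k = 0 := fun k hk => hm k q₀ (.inl hk)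
    have hconj : (x : Matrix (Fin n) (Fin n) F) * (m - vecMulVec (m.col q₀) (Pi.single q₀ 1) +
        vecMulVec (m.col q₀) r) = m * x := by
      rw [mul_add, hcomm _ hm₁, mul_eq_right_of_col_eq_one (fun k t ht => hx1 k t (.inr ht))
        (fun t l ht => by simp [vecMulVec_apply, hm t q₀ (.inl (hpq.trans ht))]), sub_mul,
        vecMulVec_mul, single_one_vecMul, row, hxr, sub_add_cancel]
    refine ⟨_, add_mem (NonUnitalAlgebra.subset_adjoin F (.inl hm₁))
      (vecMulVec_tail_row_mem_adjoin (a := a) hi hv), ?_⟩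
    exact (Units.mul_inv_eq_iff_eq_mul x).mpr hconj
  · exact (Units.mul_inv_eq_iff_eq_mul x).mpr (hcomm m hm)

theorem stmt_6 (F : Type*) [Field F] (n p q : ℕ)
    (hp : 1 ≤ p) (hpq : p ≤ q) (hq : q < n)
    (a : Matrix (Fin n) (Fin n) F) (ha : a ∉ lowerBlockSet F n q) :
    ∃ x : GL (Fin n) F,
      blockSet F n p (q + 1) ⊆
        (fun b => (x : Matrix (Fin n) (Fin n) F) * b * ((x⁻¹ : GL (Fin n) F) : Matrix (Fin n) (Fin n) F)) ''
          (NonUnitalAlgebra.adjoin F (blockSet F n p q ∪ {a}) : Set (Matrix (Fin n) (Fin n) F)) ∧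
      (fun b => (x : Matrix (Fin n) (Fin n) F) * b * ((x⁻¹ : GL (Fin n) F) : Matrix (Fin n) (Fin n) F)) ''
          blockSet F n p q = blockSet F n p q :=
  stmt_6_general F n p q hpq hq a ha
end

section
/- Let 1 ≤ p < n and let a ∈ M_n(F) not lie in the block upper-triangular subalgebra U_{p,n−p} (matrices whose lower-left (n−p)×p block is zero). Then there exists x ∈ GL_n(F) such that x⟨M_{p×n} ∪ {a}⟩x^{-1} ⊇ M_{(p+1)×n} and x M_{p×n} x^{-1} = M_{p×n}. -/
open Matrix

/-- The set of `n × n` matrices supported in the first `p` rows (`M_{p×n}`). -/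
def rowBlockSet (F : Type*) [Field F] (n p : ℕ) : Set (Matrix (Fin n) (Fin n) F) :=
  {m | ∀ i j : Fin n, p ≤ i.val → m i j = 0}

/-- `U_{p,n-p}`: block upper-triangular matrices (lower-left `(n-p) × p` block zero). -/
def upperBlockSet (F : Type*) [Field F] (n p : ℕ) : Set (Matrix (Fin n) (Fin n) F) :=
  {m | ∀ i j : Fin n, p ≤ i.val → j.val < p → m i j = 0}

lemma aux_U_mul {F : Type*} [Field F] {n p : ℕ} {A B : Matrix (Fin n) (Fin n) F}
    (hA : A ∈ upperBlockSet F n p) (hB : B ∈ upperBlockSet F n p) :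
    A * B ∈ upperBlockSet F n p := by
  intro i j hi hj
  rw [Matrix.mul_apply]
  apply Finset.sum_eq_zero
  intro k _
  by_cases hk : k.val < p
  · rw [hA i k hi hk, zero_mul]
  · rw [hB k j (le_of_not_gt hk) hj, mul_zero]

lemma aux_U_mul_row {F : Type*} [Field F] {n p : ℕ} {u m : Matrix (Fin n) (Fin n) F}
    (hu : u ∈ upperBlockSet F n p) (hm : m ∈ rowBlockSet F n p)
    (z : Matrix (Fin n) (Fin n) F) : u * m * z ∈ rowBlockSet F n p := by
  have h1 : u * m ∈ rowBlockSet F n p := by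
    intro i j hi
    rw [Matrix.mul_apply]
    apply Finset.sum_eq_zero
    intro k _
    by_cases hk : k.val < p
    · rw [hu i k hi hk, zero_mul]
    · rw [hm k j (le_of_not_gt hk), mul_zero]
  intro i j hi
  rw [Matrix.mul_apply]
  apply Finset.sum_eq_zero
  intro k _
  rw [h1 i k hi, zero_mul]

theorem stmt_7 (F : Type*) [Field F] (n p : ℕ)
    (hp : 1 ≤ p) (hpn : p < n)
    (a : Matrix (Fin n) (Fin n) F) (ha : a ∉ upperBlockSet F n p) :
    ∃ x : GL (Fin n) F,
      {m : Matrix (Fin n) (Fin n) F | ∀ i j : Fin n, p + 1 ≤ i.val → m i j = 0} ⊆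
        (fun b => (x : Matrix (Fin n) (Fin n) F) * b * ((x⁻¹ : GL (Fin n) F) : Matrix (Fin n) (Fin n) F)) ''
          (NonUnitalAlgebra.adjoin F (rowBlockSet F n p ∪ {a}) : Set (Matrix (Fin n) (Fin n) F)) ∧
      (fun b => (x : Matrix (Fin n) (Fin n) F) * b * ((x⁻¹ : GL (Fin n) F) : Matrix (Fin n) (Fin n) F)) ''
          rowBlockSet F n p = rowBlockSet F n p := by
  classical
  simp only [upperBlockSet, Set.mem_setOf_eq] at ha
  push_neg at ha
  obtain ⟨i₀, j₀, hi₀, hj₀, ha0⟩ := ha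
  set p' : Fin n := ⟨p, hpn⟩ with hp'def
  set σ : Equiv.Perm (Fin n) := Equiv.swap p' i₀ with hσdef
  have hσσ : ∀ i, σ (σ i) = i := fun i => Equiv.swap_apply_self _ _ i
  have hσp' : σ p' = i₀ := Equiv.swap_apply_left _ _
  have hσi₀ : σ i₀ = p' := Equiv.swap_apply_right _ _
  have hσge : ∀ i : Fin n, p ≤ i.val → p ≤ (σ i).val := by
    intro i hi
    rcases eq_or_ne i p' with rfl | h1
    · rw [hσp']; exact hi₀
    rcases eq_or_ne i i₀ with rfl | h2
    · rw [hσi₀]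
    · rw [hσdef, Equiv.swap_apply_of_ne_of_ne h1 h2]; exact hi
  set v : Fin n → F := fun i => if p ≤ i.val then a i j₀ else 0 with hvdef
  have hv : v i₀ ≠ 0 := by simpa [hvdef, hi₀] using ha0
  set c : Fin n → F := fun i => if i = p' then 0 else v (σ i) * (v i₀)⁻¹ with hcdef
  have hcp' : c p' = 0 := by simp [hcdef]
  set P : Matrix (Fin n) (Fin n) F := Matrix.of fun i j => if σ i = j then 1 else 0 with hPdef
  set N : Matrix (Fin n) (Fin n) F := Matrix.of fun i j => c i * (if j = p' then 1 else 0)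
    with hNdef
  have hPP : P * P = 1 := by
    ext i j
    simp only [Matrix.mul_apply, hPdef, Matrix.of_apply, ite_mul, one_mul, zero_mul]
    rw [Finset.sum_ite_eq Finset.univ (σ i)]
    simp only [Finset.mem_univ, if_true]
    rw [hσσ]
    simp [Matrix.one_apply, eq_comm]
  have hNN : N * N = 0 := by
    ext i j
    simp only [Matrix.mul_apply, hNdef, Matrix.of_apply, Matrix.zero_apply]
    apply Finset.sum_eq_zero
    intro k _
    by_cases hk : k = p'
    · subst hk; rw [hcp']; ring
    · simp [hk]
  have hEE' : (1 - N) * (1 + N) = 1 := by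
    have h : (1 - N) * (1 + N) = 1 - N * N := by noncomm_ring
    rw [h, hNN, sub_zero]
  have hE'E : (1 + N) * (1 - N) = 1 := by
    have h : (1 + N) * (1 - N) = 1 - N * N := by noncomm_ring
    rw [h, hNN, sub_zero]
  have hPU : P ∈ upperBlockSet F n p := by
    intro i j hi hj
    have h := hσge i hi
    have hne : σ i ≠ j := by
      intro heq; rw [heq] at h; omega
    simp [hPdef, hne]
  have hEU : (1 - N) ∈ upperBlockSet F n p := by
    intro i j hi hj
    have h1 : i ≠ j := by intro h; subst h; omega
    have h2 : j ≠ p' := by intro h; subst h; simp [hp'def] at hj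
    simp [hNdef, Matrix.one_apply, h1, h2]
  have hE'U : (1 + N) ∈ upperBlockSet F n p := by
    intro i j hi hj
    have h1 : i ≠ j := by intro h; subst h; omega
    have h2 : j ≠ p' := by intro h; subst h; simp [hp'def] at hj
    simp [hNdef, Matrix.one_apply, h1, h2]
  set X : Matrix (Fin n) (Fin n) F := (1 - N) * P with hXdef
  set X' : Matrix (Fin n) (Fin n) F := P * (1 + N) with hX'def
  have hXX' : X * X' = 1 := by
    rw [hXdef, hX'def, mul_assoc, ← mul_assoc P P, hPP, one_mul, hEE']
  have hX'X : X' * X = 1 := by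
    rw [hXdef, hX'def, mul_assoc, ← mul_assoc (1 + N), hE'E, one_mul, hPP]
  have hXU : X ∈ upperBlockSet F n p := aux_U_mul hEU hPU
  have hX'U : X' ∈ upperBlockSet F n p := aux_U_mul hPU hE'U
  have hX'col : ∀ i, X' i p' = v i * (v i₀)⁻¹ := by
    intro i
    have hPN : X' i p' = (if σ i = p' then 1 else 0) + c (σ i) := by
      rw [hX'def, Matrix.mul_apply]
      rw [Finset.sum_eq_single (σ i)]
      · simp [hPdef, hNdef, Matrix.one_apply, Matrix.add_apply]
      · intro k _ hk
        simp [hPdef, Ne.symm hk]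
      · simp
    rw [hPN]
    rcases eq_or_ne i i₀ with rfl | hne
    · rw [hσi₀]
      simp [hcp', mul_inv_cancel₀ hv]
    · have h1 : σ i ≠ p' := by
        intro h; apply hne; rw [← hσσ i, h, hσp']
      rw [if_neg h1, hcdef]
      simp only [if_neg h1]
      rw [hσσ]
      ring
  have hconj : ∀ b : Matrix (Fin n) (Fin n) F, X * (X' * b * X) * X' = b := by
    intro b
    calc X * (X' * b * X) * X' = (X * X') * b * (X * X') := by
          simp only [← mul_assoc]
      _ = b := by rw [hXX', one_mul, mul_one]
  refine ⟨⟨X, X', hXX', hX'X⟩, ?_, ?_⟩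
  · intro m hm
    simp only [Set.mem_setOf_eq] at hm
    simp only [Units.inv_mk, Units.val_mk, Set.mem_image]
    refine ⟨X' * m * X, ?_, hconj m⟩
    set s : Fin n → F := fun j => ∑ l, m p' l * X l j with hsdef
    set m₁ : Matrix (Fin n) (Fin n) F := Matrix.of fun i j => if p ≤ i.val then 0 else m i j
      with hm₁def
    set m₂ : Matrix (Fin n) (Fin n) F :=
      Matrix.of fun i j => (if i = p' then (1:F) else 0) * m p' j with hm₂def
    set B : Matrix (Fin n) (Fin n) F :=
      Matrix.of fun i j => (if i = j₀ then (1:F) else 0) * s j with hBdef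
    set g : Matrix (Fin n) (Fin n) F :=
      Matrix.of fun i j => if i.val < p then a i j₀ * s j else 0 with hgdef
    have hsplit : m = m₁ + m₂ := by
      ext i j
      simp only [Matrix.add_apply, hm₁def, hm₂def, Matrix.of_apply]
      rcases lt_trichotomy i.val p with h | h | h
      · have h1 : ¬ p ≤ i.val := by omega
        have h2 : i ≠ p' := by intro hh; subst hh; simp [hp'def] at h
        simp [h1, h2]
      · have h2 : i = p' := by apply Fin.ext; simp [hp'def, h]
        subst h2
        simp [hp'def]
      · have h1 : p ≤ i.val := by omega
        have h2 : i ≠ p' := by intro hh; subst hh; simp [hp'def] at h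
        have h3 : m i j = 0 := hm i j (by omega)
        simp [h1, h2, h3]
    have hkey : X' * m₂ * X = (v i₀)⁻¹ • (a * B - g) := by
      have h1 : X' * m₂ = Matrix.of fun i k => X' i p' * m p' k := by
        ext i k
        rw [Matrix.mul_apply]
        rw [Finset.sum_eq_single p']
        · simp [hm₂def]
        · intro l _ hl; simp [hm₂def, hl]
        · simp
      have h2 : a * B = Matrix.of fun i j => a i j₀ * s j := by
        ext i j
        rw [Matrix.mul_apply]
        rw [Finset.sum_eq_single j₀]
        · simp [hBdef]
        · intro k _ hk; simp [hBdef, hk]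
        · simp
      ext i j
      rw [h1]
      rw [Matrix.mul_apply]
      have h3 : ∀ k, (Matrix.of fun i k => X' i p' * m p' k) i k * X k j
          = X' i p' * (m p' k * X k j) := by
        intro k; simp [mul_assoc]
      simp only [h3]
      rw [← Finset.mul_sum]
      have hsj : (∑ k : Fin n, m p' k * X k j) = s j := rfl
      rw [hsj, hX'col i]
      simp only [Matrix.smul_apply, Matrix.sub_apply, h2, Matrix.of_apply, hgdef, smul_eq_mul]
      rcases lt_or_ge i.val p with h | h
      · have hvi : v i = 0 := by simp [hvdef]; omega
        simp [h, hvi]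
      · have h4 : ¬ i.val < p := by omega
        have hvi : v i = a i j₀ := by simp [hvdef, h]
        simp only [if_neg h4, sub_zero, hvi]
        ring
    have hmem₁ : X' * m₁ * X ∈ rowBlockSet F n p := by
      apply aux_U_mul_row hX'U _ X
      intro i j hi
      simp [hm₁def, hi]
    have hmemB : B ∈ rowBlockSet F n p := by
      intro i j hi
      have : i ≠ j₀ := by intro h; subst h; omega
      simp [hBdef, this]
    have hmemg : g ∈ rowBlockSet F n p := by
      intro i j hi
      have : ¬ i.val < p := by omega
      simp [hgdef, this]
    have hsub : rowBlockSet F n p ⊆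
        (NonUnitalAlgebra.adjoin F (rowBlockSet F n p ∪ {a}) :
          Set (Matrix (Fin n) (Fin n) F)) := by
      intro y hy
      exact NonUnitalAlgebra.subset_adjoin F (Set.mem_union_left _ hy)
    have hamem : a ∈ NonUnitalAlgebra.adjoin F (rowBlockSet F n p ∪ {a}) :=
      NonUnitalAlgebra.subset_adjoin F (Set.mem_union_right _ rfl)
    have : X' * m * X = X' * m₁ * X + (v i₀)⁻¹ • (a * B - g) := by
      rw [← hkey]
      conv_lhs => rw [hsplit]
      noncomm_ring
    rw [this]
    exact add_mem (hsub hmem₁)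
      (SMulMemClass.smul_mem _ (sub_mem (mul_mem hamem (hsub hmemB)) (hsub hmemg)))
  · simp only [Units.inv_mk, Units.val_mk]
    apply Set.Subset.antisymm
    · rintro _ ⟨b, hb, rfl⟩
      exact aux_U_mul_row hXU hb X'
    · intro m hm
      exact ⟨X' * m * X, aux_U_mul_row hX'U hm X, hconj m⟩
end

section
/- Let p, q ∈ {1,...,n} and let S ⊆ M_n(F) be such that the non-unital subalgebra generated by M_{p×q} ∪ S equals M_n(F). Then there exists T ⊆ S with |T| ≤ 2n − p − q such that the non-unital subalgebra generated by M_{p×q} ∪ T equals M_n(F). -/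
/-!
Write `A = ⟨M_{p×q} ∪ S⟩` and `E_r = span(e_1, …, e_r)`. Then `A = M_n(F)` exactly when the
smallest subspace containing `E_p` and stable under `v ↦ t v` (`t ∈ S`) is `Fⁿ`, and so is the
smallest subspace containing `E_q` and stable under `v ↦ v t` (`t ∈ S`). If `A = M_n(F)`, these
subspaces are stable under all of `M_n(F)`, which acts irreducibly on `Fⁿ`. Conversely, the
first one lies in the space of first columns of those matrices of `A` that vanish off the first
column, the second likewise for rows, so `A` contains every `E_ij = E_i1 E_1j`.

Starting from `E_p`, elements of `S` can be added one at a time, each raising the dimension of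
the closure, so `n - p` of them already give `Fⁿ`; likewise `n - q` on the row side.
-/

open Matrix Module

namespace Submodule

section InvariantClosure

variable {R V ι : Type*} [Semiring R] [AddCommMonoid V] [Module R V]

def invariantClosure (E : Submodule R V) (f : ι → Module.End R V) (S : Set ι) : Submodule R V :=
  sInf {W | E ≤ W ∧ ∀ i ∈ S, ∀ v ∈ W, f i v ∈ W}

variable {E W : Submodule R V} {f : ι → Module.End R V} {S T : Set ι}

theorem le_invariantClosure : E ≤ E.invariantClosure f S :=
  le_sInf fun _ hW => hW.1

theorem apply_mem_invariantClosure {i : ι} (hi : i ∈ S) {v : V}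
    (hv : v ∈ E.invariantClosure f S) : f i v ∈ E.invariantClosure f S :=
  mem_sInf.2 fun W hW => hW.2 i hi v (mem_sInf.1 hv W hW)

theorem invariantClosure_le (hE : E ≤ W) (hW : ∀ i ∈ S, ∀ v ∈ W, f i v ∈ W) :
    E.invariantClosure f S ≤ W :=
  sInf_le ⟨hE, hW⟩

theorem invariantClosure_mono (h : T ⊆ S) : E.invariantClosure f T ≤ E.invariantClosure f S :=
  invariantClosure_le le_invariantClosure fun _ hi _ => apply_mem_invariantClosure (h hi)

theorem invariantClosure_empty : E.invariantClosure f ∅ = E :=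
  le_antisymm (invariantClosure_le le_rfl (by simp)) le_invariantClosure

theorem exists_lt_invariantClosure_insert
    (h : E.invariantClosure f T < E.invariantClosure f S) :
    ∃ i ∈ S, E.invariantClosure f T < E.invariantClosure f (insert i T) := by
  by_contra! hstable
  refine h.not_ge (invariantClosure_le le_invariantClosure fun i hi v hv => ?_)
  have heq : E.invariantClosure f (insert i T) = E.invariantClosure f T :=
    ((invariantClosure_mono (Set.subset_insert i T)).lt_or_eq.resolve_left (hstable i hi)).symm
  rw [← heq] at hv ⊢
  exact apply_mem_invariantClosure (Set.mem_insert i T) hv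

end InvariantClosure

variable {K V ι : Type*} [DivisionRing K] [AddCommGroup V] [Module K V] [FiniteDimensional K V]
  {E : Submodule K V} {f : ι → Module.End K V}

theorem exists_finite_subset_invariantClosure_eq (S : Set ι) :
    ∃ T ⊆ S, T.Finite ∧ T.ncard ≤ finrank K (E.invariantClosure f S) - finrank K E ∧
      E.invariantClosure f T = E.invariantClosure f S := by
  suffices key : ∀ k, ∀ T₀ ⊆ S, T₀.Finite →
      finrank K (E.invariantClosure f S) ≤ finrank K (E.invariantClosure f T₀) + k →
      ∃ T ⊆ S, T.Finite ∧ T.ncard ≤ T₀.ncard + k ∧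
        E.invariantClosure f T = E.invariantClosure f S by
    simpa using key _ ∅ (Set.empty_subset S) Set.finite_empty
      (by rw [invariantClosure_empty]; omega)
  intro k
  induction k with
  | zero =>
    intro T₀ hT₀S hT₀ hrank
    exact ⟨T₀, hT₀S, hT₀, le_rfl,
      eq_of_le_of_finrank_le (invariantClosure_mono hT₀S) hrank⟩
  | succ k ih =>
    intro T₀ hT₀S hT₀ hrank
    obtain heq | hlt := (invariantClosure_mono (E := E) (f := f) hT₀S).eq_or_lt
    · exact ⟨T₀, hT₀S, hT₀, by omega, heq⟩
    obtain ⟨i, hiS, hgrow⟩ := exists_lt_invariantClosure_insert hlt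
    obtain ⟨T, hTS, hT, hcard, hcl⟩ :=
      ih (insert i T₀) (Set.insert_subset hiS hT₀S) (hT₀.insert i)
        (by have := finrank_lt_finrank_of_lt hgrow; omega)
    exact ⟨T, hTS, hT, hcard.trans (by have := Set.ncard_insert_le i T₀; omega), hcl⟩

end Submodule

section MatrixAlgebra

variable {R n : Type*} [CommSemiring R] [Fintype n]

def Submodule.mulVecStabilizer (W : Submodule R (n → R)) :
    NonUnitalSubalgebra R (Matrix n n R) where
  carrier := {x | ∀ v ∈ W, x *ᵥ v ∈ W}
  add_mem' ha hb v hv := by rw [add_mulVec]; exact W.add_mem (ha v hv) (hb v hv)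
  zero_mem' v _ := by rw [zero_mulVec]; exact W.zero_mem
  mul_mem' ha hb v hv := by rw [← mulVec_mulVec]; exact ha _ (hb v hv)
  smul_mem' c _ ha v hv := by rw [smul_mulVec]; exact W.smul_mem c (ha v hv)

def Submodule.vecMulStabilizer (W : Submodule R (n → R)) :
    NonUnitalSubalgebra R (Matrix n n R) where
  carrier := {x | ∀ v ∈ W, v ᵥ* x ∈ W}
  add_mem' ha hb v hv := by rw [vecMul_add]; exact W.add_mem (ha v hv) (hb v hv)
  zero_mem' v _ := by rw [vecMul_zero]; exact W.zero_mem
  mul_mem' ha hb v hv := by rw [← vecMul_vecMul]; exact hb _ (ha v hv)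
  smul_mem' c _ ha v hv := by rw [vecMul_smul]; exact W.smul_mem c (ha v hv)

theorem NonUnitalSubalgebra.eq_top_of_single_mem [DecidableEq n]
    {A : NonUnitalSubalgebra R (Matrix n n R)} (z : n) (hcol : ∀ i, single i z (1 : R) ∈ A)
    (hrow : ∀ j, single z j (1 : R) ∈ A) :
    A = ⊤ := by
  refine NonUnitalAlgebra.eq_top_iff.2 fun x => ?_
  rw [matrix_eq_sum_single x]
  refine sum_mem fun i _ => sum_mem fun j _ => ?_
  have hsingle : single i j (x i j) = x i j • (single i z (1 : R) * single z j 1) := by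
    rw [single_mul_single_same, mul_one, smul_single, smul_eq_mul, mul_one]
  rw [hsingle]
  exact SMulMemClass.smul_mem _ (mul_mem (hcol i) (hrow j))

end MatrixAlgebra

section Irreducible

variable {K n : Type*} [Field K] [Fintype n] [DecidableEq n] {G : Set (Matrix n n K)}
  {W : Submodule K (n → K)}

theorem Submodule.eq_top_of_mulVec_mem (hG : NonUnitalAlgebra.adjoin K G = ⊤) (hW : W ≠ ⊥)
    (hGW : ∀ g ∈ G, ∀ v ∈ W, g *ᵥ v ∈ W) : W = ⊤ := by
  have hstab : W.mulVecStabilizer = ⊤ := top_le_iff.1 (hG ▸ NonUnitalAlgebra.adjoin_le hGW)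
  obtain ⟨w, hw, hw0⟩ := W.ne_bot_iff.1 hW
  obtain ⟨z, hz⟩ := Function.ne_iff.1 hw0
  refine eq_top_iff'.2 fun v => ?_
  have hx : vecMulVec v (Pi.single z (w z)⁻¹) ∈ W.mulVecStabilizer := hstab ▸ trivial
  have hmem := hx w hw
  rwa [vecMulVec_mulVec, single_dotProduct, inv_mul_cancel₀ hz, MulOpposite.op_one,
    one_smul] at hmem

theorem Submodule.eq_top_of_vecMul_mem (hG : NonUnitalAlgebra.adjoin K G = ⊤) (hW : W ≠ ⊥)
    (hGW : ∀ g ∈ G, ∀ v ∈ W, v ᵥ* g ∈ W) : W = ⊤ := by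
  have hstab : W.vecMulStabilizer = ⊤ := top_le_iff.1 (hG ▸ NonUnitalAlgebra.adjoin_le hGW)
  obtain ⟨w, hw, hw0⟩ := W.ne_bot_iff.1 hW
  obtain ⟨z, hz⟩ := Function.ne_iff.1 hw0
  refine eq_top_iff'.2 fun v => ?_
  have hx : vecMulVec (Pi.single z (w z)⁻¹) v ∈ W.vecMulStabilizer := hstab ▸ trivial
  have hmem := hx w hw
  rwa [vecMul_vecMulVec, dotProduct_single, mul_inv_cancel₀ hz, one_smul] at hmem

end Irreducible

def firstCoords (R : Type*) [Semiring R] (n p : ℕ) : Submodule R (Fin n → R) :=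
  Submodule.pi {i | p ≤ (i : ℕ)} fun _ => ⊥

theorem mem_firstCoords {R : Type*} [Semiring R] {n p : ℕ} {v : Fin n → R} :
    v ∈ firstCoords R n p ↔ ∀ i : Fin n, p ≤ i → v i = 0 := by
  simp [firstCoords, Submodule.mem_pi]

section BlockSet

variable {K : Type*} [Field K] {n p q : ℕ}

theorem le_finrank_firstCoords (hpn : p ≤ n) : p ≤ finrank K (firstCoords K n p) := by
  have hli := (Pi.basisFun K (Fin n)).linearIndependent.comp _ (Fin.castLE_injective hpn)
  calc p = finrank K (Submodule.span K (Set.range (Pi.basisFun K (Fin n) ∘ Fin.castLE hpn))) :=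
        by rw [finrank_span_eq_card hli, Fintype.card_fin]
    _ ≤ finrank K (firstCoords K n p) := by
        refine Submodule.finrank_mono (Submodule.span_le.2 ?_)
        rintro _ ⟨i, rfl⟩
        refine mem_firstCoords.2 fun j hj => ?_
        rw [Function.comp_apply, Pi.basisFun_apply]
        exact Pi.single_eq_of_ne (Fin.ne_of_val_ne (by simp only [Fin.val_castLE]; omega)) _

theorem firstCoords_ne_bot (hp : 1 ≤ p) (hpn : p ≤ n) : firstCoords K n p ≠ ⊥ := fun h => by
  have := le_finrank_firstCoords (K := K) hpn
  rw [h, finrank_bot] at this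
  omega

theorem mulVec_mem_firstCoords {b : Matrix (Fin n) (Fin n) K} (hb : b ∈ blockSet K n p q)
    (v : Fin n → K) : b *ᵥ v ∈ firstCoords K n p :=
  mem_firstCoords.2 fun i hi => by simp [mulVec, dotProduct, hb i _ (Or.inl hi)]

theorem vecMul_mem_firstCoords {b : Matrix (Fin n) (Fin n) K} (hb : b ∈ blockSet K n p q)
    (v : Fin n → K) : v ᵥ* b ∈ firstCoords K n q :=
  mem_firstCoords.2 fun j hj => by simp [vecMul, dotProduct, hb _ j (Or.inr hj)]

theorem vecMulVec_mem_blockSet_s8 {v u : Fin n → K} (hv : v ∈ firstCoords K n p)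
    (hu : u ∈ firstCoords K n q) : vecMulVec v u ∈ blockSet K n p q := by
  rintro i j (hi | hj)
  · rw [vecMulVec_apply, mem_firstCoords.1 hv i hi, zero_mul]
  · rw [vecMulVec_apply, mem_firstCoords.1 hu j hj, mul_zero]

end BlockSet

section Criterion

variable {K : Type*} [Field K] {n p q : ℕ} {S : Set (Matrix (Fin n) (Fin n) K)}

open NonUnitalAlgebra Submodule

theorem invariantClosure_mulVecLin_eq_top (hp : 1 ≤ p) (hpn : p ≤ n)
    (hS : adjoin K (blockSet K n p q ∪ S) = ⊤) :
    (firstCoords K n p).invariantClosure mulVecLin S = ⊤ := by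
  refine eq_top_of_mulVec_mem hS
    (ne_bot_of_le_ne_bot (firstCoords_ne_bot hp hpn) le_invariantClosure) ?_
  rintro g (hg | hg) v hv
  · exact le_invariantClosure (mulVec_mem_firstCoords hg v)
  · exact apply_mem_invariantClosure hg hv

theorem invariantClosure_vecMulLinear_eq_top (hq : 1 ≤ q) (hqn : q ≤ n)
    (hS : adjoin K (blockSet K n p q ∪ S) = ⊤) :
    (firstCoords K n q).invariantClosure vecMulLinear S = ⊤ := by
  refine eq_top_of_vecMul_mem hS
    (ne_bot_of_le_ne_bot (firstCoords_ne_bot hq hqn) le_invariantClosure) ?_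
  rintro g (hg | hg) v hv
  · exact le_invariantClosure (vecMul_mem_firstCoords hg v)
  · exact apply_mem_invariantClosure hg hv

theorem adjoin_eq_top_of_invariantClosure_eq_top (hp : 1 ≤ p) (hq : 1 ≤ q) (hpn : p ≤ n)
    (hcol : (firstCoords K n p).invariantClosure mulVecLin S = ⊤)
    (hrow : (firstCoords K n q).invariantClosure vecMulLinear S = ⊤) :
    adjoin K (blockSet K n p q ∪ S) = ⊤ := by
  set A := adjoin K (blockSet K n p q ∪ S)
  have hSA : ∀ t ∈ S, t ∈ A := fun t ht => subset_adjoin K (Or.inr ht)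
  let z : Fin n := ⟨0, by omega⟩
  have hz : ∀ {r : ℕ}, 1 ≤ r → Pi.single z (1 : K) ∈ firstCoords K n r := fun hr =>
    mem_firstCoords.2 fun i hi =>
      Pi.single_eq_of_ne (Fin.ne_of_val_ne (show (i : ℕ) ≠ 0 by omega)) _
  have hcolA : ∀ v, vecMulVec v (Pi.single z 1) ∈ A := by
    have hle : (firstCoords K n p).invariantClosure mulVecLin S ≤
        A.toSubmodule.comap ((vecMulVecBilin K K).flip (Pi.single z 1)) :=
      invariantClosure_le
        (fun v hv => subset_adjoin K (Or.inl (vecMulVec_mem_blockSet_s8 hv (hz hq))))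
        fun t ht v hv => by
          simpa [mul_vecMulVec] using mul_mem (hSA t ht) (show vecMulVec v _ ∈ A from hv)
    exact fun v => hle (hcol ▸ mem_top)
  have hrowA : ∀ v, vecMulVec (Pi.single z 1) v ∈ A := by
    have hle : (firstCoords K n q).invariantClosure vecMulLinear S ≤
        A.toSubmodule.comap (vecMulVecBilin K K (Pi.single z 1)) :=
      invariantClosure_le
        (fun v hv => subset_adjoin K (Or.inl (vecMulVec_mem_blockSet_s8 (hz hp) hv)))
        fun t ht v hv => by
          simpa [vecMulVec_mul] using mul_mem (show vecMulVec _ v ∈ A from hv) (hSA t ht)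
    exact fun v => hle (hrow ▸ mem_top)
  exact NonUnitalSubalgebra.eq_top_of_single_mem z
    (fun i => (single_eq_single_vecMulVec_single (α := K) i z) ▸ hcolA _)
    (fun j => (single_eq_single_vecMulVec_single (α := K) z j) ▸ hrowA _)

end Criterion

theorem stmt_8 (F : Type*) [Field F] (n p q : ℕ)
    (hp : 1 ≤ p) (hpn : p ≤ n) (hq : 1 ≤ q) (hqn : q ≤ n)
    (S : Set (Matrix (Fin n) (Fin n) F))
    (hS : NonUnitalAlgebra.adjoin F (blockSet F n p q ∪ S) = ⊤) :
    ∃ T ⊆ S, T.Finite ∧ T.ncard ≤ 2 * n - p - q ∧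
      NonUnitalAlgebra.adjoin F (blockSet F n p q ∪ T) = ⊤ := by
  obtain ⟨T₁, hT₁S, hT₁, hcard₁, hcl₁⟩ :=
    (firstCoords F n p).exists_finite_subset_invariantClosure_eq (f := mulVecLin) S
  obtain ⟨T₂, hT₂S, hT₂, hcard₂, hcl₂⟩ :=
    (firstCoords F n q).exists_finite_subset_invariantClosure_eq (f := vecMulLinear) S
  rw [invariantClosure_mulVecLin_eq_top hp hpn hS] at hcard₁ hcl₁
  rw [invariantClosure_vecMulLinear_eq_top hq hqn hS] at hcard₂ hcl₂
  refine ⟨T₁ ∪ T₂, Set.union_subset hT₁S hT₂S, hT₁.union hT₂, ?_, ?_⟩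
  · have := Set.ncard_union_le T₁ T₂
    have := le_finrank_firstCoords (K := F) hpn
    have := le_finrank_firstCoords (K := F) hqn
    rw [finrank_top, finrank_fin_fun] at hcard₁ hcard₂
    omega
  · exact adjoin_eq_top_of_invariantClosure_eq_top hp hq hpn
      (top_le_iff.1 (hcl₁ ▸ Submodule.invariantClosure_mono Set.subset_union_left))
      (top_le_iff.1 (hcl₂ ▸ Submodule.invariantClosure_mono Set.subset_union_right))
end

section
/- Any GL_3(F)-independent subset of Sub(F^3) consisting only of 1-dimensional subspaces has at most 4 elements. -/
/-!
An endomorphism of `F³` preserving three distinct lines of a plane acts on that plane as a scalar,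
and one preserving four lines in general position (a projective frame) is a scalar. Five distinct
lines of `F³` contain four coplanar lines or a frame, so one of the five lines is preserved by every
`g` preserving the other four, contradicting independence.
-/

open Matrix

/-- `S ⊆ Sub(F³)` is `GL₃(F)`-independent if for every `V ∈ S` there is a
`g ∈ GL₃(F)` stabilizing every member of `S \ {V}` but not `V`. -/
def glIndep {F : Type*} [Field F] {n : ℕ} (S : Set (Submodule F (Fin n → F))) : Prop :=
  ∀ V ∈ S, ∃ g : GL (Fin n) F,
    (∀ U ∈ S \ {V},
      U.map ((g : Matrix (Fin n) (Fin n) F).mulVecLin) = U) ∧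
    V.map ((g : Matrix (Fin n) (Fin n) F).mulVecLin) ≠ V

open Module Submodule

section

variable {F M ι κ : Type*} [Field F] [AddCommGroup M] [Module F M]

namespace Module.End

theorem exists_span_le_eigenspace_of_frame [Fintype κ] {b : κ → M}
    (hb : LinearIndependent F b) {c : κ → F} (hc : ∀ k, c k ≠ 0) {f : End F M}
    (hfb : ∀ k, f (b k) ∈ F ∙ b k) (hfc : f (∑ k, c k • b k) ∈ F ∙ ∑ k, c k • b k) :
    ∃ μ, span F (Set.range b) ≤ f.eigenspace μ := by
  choose μ hμ using fun k => mem_span_singleton.1 (hfb k)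
  obtain ⟨ν, hν⟩ := mem_span_singleton.1 hfc
  have hsum : ∑ k, (c k * (μ k - ν)) • b k = 0 :=
    calc ∑ k, (c k * (μ k - ν)) • b k = f (∑ k, c k • b k) - ν • ∑ k, c k • b k := by
          simp only [map_sum, map_smul, ← hμ, Finset.smul_sum, mul_sub, sub_smul, mul_smul,
            smul_comm ν, Finset.sum_sub_distrib]
      _ = 0 := by rw [← hν, sub_self]
  have hμν : ∀ k, μ k = ν := fun k => sub_eq_zero.1 <|
    (mul_eq_zero.1 (Fintype.linearIndependent_iff.1 hb _ hsum k)).resolve_left (hc k)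
  refine ⟨ν, span_le.2 ?_⟩
  rintro _ ⟨k, rfl⟩
  rw [SetLike.mem_coe, mem_eigenspace_iff, ← hμ, hμν]

theorem apply_mem_span_singleton_of_frame [Fintype κ] {b : κ → M}
    (hb : LinearIndependent F b) {c : κ → F} (hc : ∀ k, c k ≠ 0) {f : End F M}
    (hfb : ∀ k, f (b k) ∈ F ∙ b k) (hfc : f (∑ k, c k • b k) ∈ F ∙ ∑ k, c k • b k)
    {w : M} (hw : w ∈ span F (Set.range b)) : f w ∈ F ∙ w := by
  obtain ⟨μ, hμ⟩ := exists_span_le_eigenspace_of_frame hb hc hfb hfc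
  exact mem_span_singleton.2 ⟨μ, (mem_eigenspace_iff.1 (hμ hw)).symm⟩

end Module.End

namespace Submodule

theorem mem_span_pair_exchange {x y z : M} (h : x ∈ span F {y, z}) (hx : x ∉ F ∙ y) :
    z ∈ span F {x, y} :=
  mem_span_insert_exchange (by rwa [Set.pair_comm]) hx

theorem span_singleton_eq_of_mem {v w : M} (hv : v ≠ 0) (h : v ∈ F ∙ w) : F ∙ v = F ∙ w := by
  obtain ⟨a, rfl⟩ := mem_span_singleton.1 h
  exact span_singleton_smul_eq (IsUnit.mk0 a (left_ne_zero_of_smul hv)) w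

theorem exists_ne_zero_eq_span_singleton_of_finrank_eq_one {L : Submodule F M}
    (h : finrank F L = 1) : ∃ v ≠ 0, L = F ∙ v := by
  have : FiniteDimensional F L := .of_finrank_pos (by omega)
  obtain ⟨v, hvL, hv0⟩ := L.exists_mem_ne_zero_of_ne_bot (by rintro rfl; simp at h)
  refine ⟨v, hv0, (eq_of_le_of_finrank_eq ((span_singleton_le_iff_mem _ _).2 hvL) ?_).symm⟩
  rw [finrank_span_singleton hv0, h]

end Submodule

theorem linearIndependent_pair_of_notMem_span_singleton {x y : M} (hxy : x ∉ F ∙ y)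
    (hyx : y ∉ F ∙ x) : LinearIndependent F ![x, y] :=
  (LinearIndependent.pair_iff' fun h => hxy (by rw [h]; exact zero_mem _)).2 fun t ht =>
    hyx (ht ▸ smul_mem _ _ (mem_span_singleton_self _))

variable (F) in
def LineForced (v : ι → M) (i : ι) : Prop :=
  ∀ f : Module.End F M, (∀ j ≠ i, f (v j) ∈ F ∙ v j) → f (v i) ∈ F ∙ v i

theorem LineForced.comp {v : ι → M} {e : κ → ι} (he : Function.Injective e) {k : κ}
    (h : LineForced F (v ∘ e) k) : LineForced F v (e k) :=
  fun f hf => h f fun j hj => hf (e j) (he.ne hj)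

theorem lineForced_of_mem_span_pair {v : ι → M} (hv : Pairwise fun i j => v i ∉ F ∙ v j)
    {a b c d : ι} (hnd : [a, b, c, d].Nodup)
    (hc : v c ∈ span F {v a, v b}) (hd : v d ∈ span F {v a, v b}) : LineForced F v d := by
  simp only [List.nodup_cons, List.mem_cons, List.not_mem_nil, not_or] at hnd
  obtain ⟨⟨hab, hac, had, -⟩, ⟨hbc, hbd, -⟩, ⟨hcd, -⟩, -⟩ := hnd
  obtain ⟨x, y, hxy⟩ := mem_span_pair.1 hc
  have hx : x ≠ 0 := by
    rintro rfl
    refine hv (Ne.symm hbc) ?_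
    rw [← hxy, zero_smul, zero_add]
    exact smul_mem _ _ (mem_span_singleton_self _)
  have hy : y ≠ 0 := by
    rintro rfl
    refine hv (Ne.symm hac) ?_
    rw [← hxy, zero_smul, add_zero]
    exact smul_mem _ _ (mem_span_singleton_self _)
  intro f hf
  refine Module.End.apply_mem_span_singleton_of_frame
    (linearIndependent_pair_of_notMem_span_singleton (hv hab) (hv (Ne.symm hab)))
    (c := ![x, y]) ?_ ?_ ?_ ?_
  · simp [Fin.forall_fin_two, hx, hy]
  · simpa [Fin.forall_fin_two] using ⟨hf a had, hf b hbd⟩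
  · simpa [Fin.sum_univ_two, hxy] using hf c hcd
  · rwa [Matrix.range_cons_cons_empty]

theorem lineForced_of_frame (hM : finrank F M = 3) {v : ι → M}
    (hv : Pairwise fun i j => v i ∉ F ∙ v j) {a b c d e : ι} (hnd : [a, b, c, d, e].Nodup)
    (ha : v a ∉ span F {v b, v c}) (hda : v d ∉ span F {v b, v c})
    (hdb : v d ∉ span F {v a, v c}) (hdc : v d ∉ span F {v a, v b}) : LineForced F v e := by
  simp only [List.nodup_cons, List.mem_cons, List.not_mem_nil, not_or] at hnd
  obtain ⟨⟨-, -, -, hae, -⟩, ⟨hbc, -, hbe, -⟩, ⟨-, hce, -⟩, ⟨hde, -⟩, -⟩ := hnd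
  have hli : LinearIndependent F ![v a, v b, v c] := by
    refine linearIndependent_finCons.2
      ⟨linearIndependent_pair_of_notMem_span_singleton (hv hbc) (hv (Ne.symm hbc)), ?_⟩
    rwa [Matrix.range_cons_cons_empty]
  have htop : span F (Set.range ![v a, v b, v c]) = ⊤ :=
    hli.span_eq_top_of_card_eq_finrank (by simp [hM])
  obtain ⟨g, hg⟩ := (mem_span_range_iff_exists_fun F).1 (htop ▸ mem_top : v d ∈ _)
  have hg' := hg
  simp only [Fin.sum_univ_three, Matrix.cons_val_zero, Matrix.cons_val_one,
    Matrix.cons_val_two, Matrix.head_cons, Matrix.tail_cons] at hg'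
  have hg0 : g 0 ≠ 0 := fun hk =>
    hda (by rw [← hg', hk, zero_smul, zero_add]; exact mem_span_pair.2 ⟨_, _, rfl⟩)
  have hg1 : g 1 ≠ 0 := fun hk =>
    hdb (by rw [← hg', hk, zero_smul, add_zero]; exact mem_span_pair.2 ⟨_, _, rfl⟩)
  have hg2 : g 2 ≠ 0 := fun hk =>
    hdc (by rw [← hg', hk, zero_smul, add_zero]; exact mem_span_pair.2 ⟨_, _, rfl⟩)
  intro f hf
  refine Module.End.apply_mem_span_singleton_of_frame hli
    (by simpa [Fin.forall_fin_succ] using ⟨hg0, hg1, hg2⟩) ?_ (by rw [hg]; exact hf d hde)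
    (htop ▸ mem_top)
  simpa [Fin.forall_fin_succ] using ⟨hf a hae, hf b hbe, hf c hce⟩

theorem exists_lineForced_of_mem_span_pair (hM : finrank F M = 3) {v : Fin 5 → M}
    (hv : Pairwise fun i j => v i ∉ F ∙ v j) (h2 : v 2 ∈ span F {v 0, v 1}) :
    ∃ i, LineForced F v i := by
  by_cases h3 : v 3 ∈ span F {v 0, v 1}
  · exact ⟨3, lineForced_of_mem_span_pair hv (by decide) h2 h3⟩
  by_cases h4 : v 4 ∈ span F {v 0, v 1}
  · exact ⟨4, lineForced_of_mem_span_pair hv (by decide) h2 h4⟩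
  have h02 : span F {v 0, v 2} ≤ span F {v 0, v 1} :=
    span_le.2 (Set.insert_subset_iff.2 ⟨subset_span (by simp), by simpa using h2⟩)
  have h12 : span F {v 1, v 2} ≤ span F {v 0, v 1} :=
    span_le.2 (Set.insert_subset_iff.2 ⟨subset_span (by simp), by simpa using h2⟩)
  have hex {i} (h : v 4 ∈ span F {v 3, v i}) : v i ∈ span F {v 4, v 3} :=
    mem_span_pair_exchange h (hv (by decide))
  -- `q i`: the vectors `v 3, v 4, v i` are coplanar. Two of the `q i` give four coplanar vectors;
  -- otherwise dropping the `v i` with `q i` (or `v 2`) leaves a frame.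
  by_cases q0 : v 4 ∈ span F {v 3, v 0}
  · by_cases q1 : v 4 ∈ span F {v 3, v 1}
    · exact ⟨1, lineForced_of_mem_span_pair hv (by decide) (hex q0) (hex q1)⟩
    by_cases q2 : v 4 ∈ span F {v 3, v 2}
    · exact ⟨2, lineForced_of_mem_span_pair hv (by decide) (hex q0) (hex q2)⟩
    exact ⟨0, lineForced_of_frame hM hv (by decide) (h3 <| h12 ·) (h4 <| h12 ·) q2 q1⟩
  by_cases q1 : v 4 ∈ span F {v 3, v 1}
  · by_cases q2 : v 4 ∈ span F {v 3, v 2}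
    · exact ⟨2, lineForced_of_mem_span_pair hv (by decide) (hex q1) (hex q2)⟩
    exact ⟨1, lineForced_of_frame hM hv (by decide) (h3 <| h02 ·) (h4 <| h02 ·) q2 q0⟩
  exact ⟨2, lineForced_of_frame hM hv (by decide) h3 h4 q1 q0⟩

theorem exists_lineForced (hM : finrank F M = 3) {v : Fin 5 → M}
    (hv : Pairwise fun i j => v i ∉ F ∙ v j) : ∃ i, LineForced F v i := by
  -- once three of `v 0, …, v 3` are coplanar, a permutation moves them to `v 0, v 1, v 2`
  have key (σ : Equiv.Perm (Fin 5)) (h : v (σ 2) ∈ span F {v (σ 0), v (σ 1)}) :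
      ∃ i, LineForced F v i :=
    let ⟨k, hk⟩ := exists_lineForced_of_mem_span_pair hM (hv.comp_of_injective σ.injective) h
    ⟨σ k, hk.comp σ.injective⟩
  by_cases h2 : v 2 ∈ span F {v 0, v 1}
  · exact key 1 h2
  by_cases h3 : v 3 ∈ span F {v 0, v 1}
  · exact key (Equiv.swap 2 3) (by simpa [Equiv.swap_apply_of_ne_of_ne] using h3)
  by_cases h3' : v 3 ∈ span F {v 0, v 2}
  · exact key (Equiv.swap 1 2 * Equiv.swap 2 3) (by simpa [Equiv.swap_apply_of_ne_of_ne] using h3')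
  by_cases h3'' : v 3 ∈ span F {v 1, v 2}
  · exact key (finRotate 5) h3''
  exact ⟨4, lineForced_of_frame hM hv (by decide)
    (fun h => h2 (mem_span_pair_exchange h (hv (by decide)))) h3'' h3' h3⟩

end

theorem Set.finite_and_ncard_le_of_forall_injective {α : Type*} {S : Set α} {n : ℕ}
    (h : ∀ L : Fin (n + 1) → α, Function.Injective L → ∃ i, L i ∉ S) :
    S.Finite ∧ S.ncard ≤ n := by
  rw [← Set.encard_le_coe_iff_finite_ncard_le]
  by_contra! hS
  obtain ⟨t, hts, ht⟩ := Set.exists_subset_encard_eq (Order.add_one_le_of_lt hS)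
  have : Finite t := Set.finite_of_encard_eq_coe ht
  have hcard : Nat.card t = n + 1 := by
    rw [Nat.card_coe_set_eq, Set.ncard_def, ht]; rfl
  obtain ⟨i, hi⟩ := h (fun i => (Finite.equivFinOfCardEq hcard).symm i)
    (Subtype.val_injective.comp (Equiv.injective _))
  exact hi (hts (Subtype.property _))

theorem stmt_15 (F : Type*) [Field F]
    (S : Set (Submodule F (Fin 3 → F)))
    (hlines : ∀ V ∈ S, Module.finrank F V = 1)
    (hindep : glIndep S) :
    S.Finite ∧ S.ncard ≤ 4 := by
  refine Set.finite_and_ncard_le_of_forall_injective fun L hL => ?_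
  by_contra! hLS
  choose v hv0 hvL using fun i =>
    exists_ne_zero_eq_span_singleton_of_finrank_eq_one (hlines _ (hLS i))
  have hv : Pairwise fun i j => v i ∉ F ∙ v j := fun i j hij h =>
    hij (hL (by rw [hvL, hvL, span_singleton_eq_of_mem (hv0 i) h]))
  obtain ⟨i, hi⟩ := exists_lineForced (by simp) hv
  obtain ⟨g, hfix, hmove⟩ := hindep (L i) (hLS i)
  set f := (g : Matrix (Fin 3) (Fin 3) F).mulVecLin
  have hf : Function.Injective f := Matrix.mulVec_injective_iff_isUnit.2 g.isUnit
  have hfv : f (v i) ∈ F ∙ v i := hi f fun j hj => by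
    have := hfix (L j) ⟨hLS j, fun h => hj (hL h)⟩
    rw [hvL j] at this
    exact this ▸ mem_map_of_mem (mem_span_singleton_self _)
  apply hmove
  rw [hvL i, map_span, Set.image_singleton]
  exact span_singleton_eq_of_mem ((map_ne_zero_iff f hf).2 (hv0 i)) hfv
end

section
/- Suppose |F| > 2 and let L_1, L_2, L_3, L_4 be four distinct lines in F^3 not all contained in a common plane. Then {L_1, L_2, L_3, L_4} is GL_3(F)-independent. -/
open Matrix

section Helpers

variable {F : Type*} [Field F]

/-- A rank-one submodule of `F³` is the span of a nonzero vector. -/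
lemma line_gen (W : Submodule F (Fin 3 → F)) (h : Module.finrank F W = 1) :
    ∃ v : Fin 3 → F, v ≠ 0 ∧ W = Submodule.span F {v} := by
  obtain ⟨v, hv0, hv⟩ := finrank_eq_one_iff'.mp h
  refine ⟨(v : Fin 3 → F), fun h => hv0 (ZeroMemClass.coe_eq_zero.mp h), le_antisymm ?_ ?_⟩
  · intro w hw
    obtain ⟨c, hc⟩ := hv ⟨w, hw⟩
    have hw' : w = c • (v : Fin 3 → F) := by
      have := congrArg (Subtype.val) hc
      simpa using this.symm
    rw [hw']
    exact Submodule.smul_mem _ _ (Submodule.mem_span_singleton_self _)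
  · rw [Submodule.span_singleton_le_iff_mem]
    exact v.2

/-- Any linear automorphism of `Fin 3 → F` arises from a matrix in `GL`. -/
lemma exists_gl (e : (Fin 3 → F) ≃ₗ[F] (Fin 3 → F)) :
    ∃ g : GL (Fin 3) F,
      ((g : Matrix (Fin 3) (Fin 3) F).mulVecLin) = (e : (Fin 3 → F) →ₗ[F] (Fin 3 → F)) := by
  refine ⟨Matrix.GeneralLinearGroup.toLin.symm (LinearMap.GeneralLinearGroup.ofLinearEquiv e), ?_⟩
  have : ((Matrix.GeneralLinearGroup.toLin.symm
      (LinearMap.GeneralLinearGroup.ofLinearEquiv e) : GL (Fin 3) F) :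
        Matrix (Fin 3) (Fin 3) F) = LinearMap.toMatrix' (e : (Fin 3 → F) →ₗ[F] (Fin 3 → F)) := rfl
  rw [this]
  ext vv
  have harg : (fun j' => if j' = vv then (1 : F) else 0) = Pi.single vv 1 := by
    funext j'; simp [Pi.single_apply]
  simp only [Matrix.mulVecLin, Matrix.toLin'_toMatrix']
  simp [Matrix.mulVecLin, harg]

lemma map_line (f : (Fin 3 → F) →ₗ[F] (Fin 3 → F)) (x : Fin 3 → F) :
    (Submodule.span F {x}).map f = Submodule.span F {f x} := by
  rw [Submodule.map_span, Set.image_singleton]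

lemma notMem_of_span_ne {u w : Fin 3 → F} (hu : u ≠ 0)
    (h : Submodule.span F ({u} : Set (Fin 3 → F)) ≠ Submodule.span F {w}) :
    u ∉ Submodule.span F ({w} : Set (Fin 3 → F)) := by
  intro hm
  obtain ⟨c, hc⟩ := Submodule.mem_span_singleton.mp hm
  have hc0 : c ≠ 0 := by rintro rfl; simp at hc; exact hu hc.symm
  apply h
  rw [← hc]
  exact Submodule.span_singleton_smul_eq (IsUnit.mk0 c hc0) w

end Helpers

theorem stmt_16 (F : Type*) [Field F] (hF : (2 : Cardinal) < Cardinal.mk F)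
    (L : Fin 4 → Submodule F (Fin 3 → F))
    (hdim : ∀ i, Module.finrank F (L i) = 1)
    (hdist : Function.Injective L)
    (hplane : ¬ ∃ P : Submodule F (Fin 3 → F),
      Module.finrank F P = 2 ∧ ∀ i, L i ≤ P) :
    glIndep (Set.range L) := by
  classical
  -- choose generators
  choose v hv0 hvspan using fun i => line_gen (L i) (hdim i)
  -- a field element ≠ 0, 1
  have hF3 : ∃ a : F, a ≠ 0 ∧ a ≠ 1 := by
    by_contra h
    push_neg at h
    have hsub : (Set.univ : Set F) ⊆ {0, 1} := by
      intro x _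
      by_cases hx : x = 0
      · exact Or.inl hx
      · exact Or.inr (h x hx)
    have h1 : Cardinal.mk F ≤ Cardinal.mk ({0, 1} : Set F) := by
      rw [← Cardinal.mk_univ]
      exact Cardinal.mk_le_mk_of_subset hsub
    have h2 : Cardinal.mk ({0, 1} : Set F) ≤ 2 := by
      refine (Cardinal.mk_insert_le).trans ?_
      rw [Cardinal.mk_singleton, one_add_one_eq_two]
    exact absurd hF (not_lt.mpr (h1.trans h2))
  obtain ⟨a, ha0, ha1⟩ := hF3
  rintro V ⟨i0, rfl⟩
  set v0 : Fin 3 → F := v i0 with hv0def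
  -- the other three lines
  set m : Fin 3 → Fin 4 := i0.succAbove with hmdef
  set w : Fin 3 → (Fin 3 → F) := fun t => v (m t) with hwdef
  have hw0 : ∀ t, w t ≠ 0 := fun t => hv0 (m t)
  have hmne : ∀ t, m t ≠ i0 := fun t => Fin.succAbove_ne i0 t
  have hspan_ne : ∀ i j, L i ≠ L j → Submodule.span F ({v i} : Set (Fin 3 → F)) ≠
      Submodule.span F {v j} := by
    intro i j hij
    rw [← hvspan i, ← hvspan j]; exact hij
  by_cases hind : LinearIndependent F w
  · -- Case A: the three other directions form a basis
    have hcard : Fintype.card (Fin 3) = Module.finrank F (Fin 3 → F) := by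
      simp [Module.finrank_fin_fun]
    set b := basisOfLinearIndependentOfCardEqFinrank hind hcard with hbdef
    have hb : ⇑b = w := coe_basisOfLinearIndependentOfCardEqFinrank hind hcard
    set c : Fin 3 → F := fun k => b.repr v0 k with hcdef
    have hv0sum : v0 = ∑ k, c k • b k := (b.sum_repr v0).symm
    -- at least two nonzero coordinates
    have htwo : ∃ i j : Fin 3, i ≠ j ∧ c i ≠ 0 ∧ c j ≠ 0 := by
      have hex : ∃ i, c i ≠ 0 := by
        by_contra hc
        push_neg at hc
        apply hv0 i0
        rw [← hv0def, hv0sum]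
        simp [hc]
      obtain ⟨i, hci⟩ := hex
      by_cases hj : ∃ j, j ≠ i ∧ c j ≠ 0
      · obtain ⟨j, hji, hcj⟩ := hj
        exact ⟨j, i, hji, hcj, hci⟩
      · push_neg at hj
        exfalso
        have hv0eq : v0 = c i • b i := by
          rw [hv0sum, Finset.sum_eq_single i]
          · intro k _ hk
            rw [hj k hk, zero_smul]
          · intro hk; simp at hk
        have : L i0 = L (m i) := by
          rw [hvspan i0, hvspan (m i), ← hv0def, hv0eq]
          have := Submodule.span_singleton_smul_eq (IsUnit.mk0 (c i) hci) (b i)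
          rw [this, hb]
        exact hmne i (hdist this.symm)
    obtain ⟨i, j, hij, hci, hcj⟩ := htwo
    set d : Fin 3 → F := fun k => if k = i then a else 1 with hddef
    have hd0 : ∀ k, d k ≠ 0 := by
      intro k; by_cases hk : k = i <;> simp [hddef, hk, ha0]
    -- construct the diagonal automorphism
    set f : (Fin 3 → F) →ₗ[F] (Fin 3 → F) := b.constr F (fun k => d k • b k) with hfdef
    set finv : (Fin 3 → F) →ₗ[F] (Fin 3 → F) := b.constr F (fun k => (d k)⁻¹ • b k)
      with hfinvdef
    have hcomp1 : f ∘ₗ finv = LinearMap.id := by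
      apply b.ext
      intro k
      simp [hfdef, hfinvdef, Module.Basis.constr_basis, _root_.map_smul, smul_smul,
        inv_mul_cancel₀ (hd0 k)]
    have hcomp2 : finv ∘ₗ f = LinearMap.id := by
      apply b.ext
      intro k
      simp [hfdef, hfinvdef, Module.Basis.constr_basis, _root_.map_smul, smul_smul,
        mul_inv_cancel₀ (hd0 k)]
    set e : (Fin 3 → F) ≃ₗ[F] (Fin 3 → F) := LinearEquiv.ofLinear f finv hcomp1 hcomp2
      with hedef
    have heb : ∀ k, e (b k) = d k • b k := by
      intro k
      simp [hedef, hfdef, Module.Basis.constr_basis]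
    obtain ⟨g, hg⟩ := exists_gl e
    refine ⟨g, ?_, ?_⟩
    · rintro U ⟨⟨q, rfl⟩, hne⟩
      have hqne : L q ≠ L i0 := by simpa using hne
      obtain ⟨t, ht⟩ := Fin.exists_succAbove_eq (fun h => hqne (congrArg L h))
      rw [hg, hvspan q, map_line]
      have hvq : v q = w t := by rw [hwdef]; simp [hmdef, ht]
      rw [hvq, ← hb]
      have : e ((b : Fin 3 → (Fin 3 → F)) t) = d t • b t := heb t
      rw [show ((e : (Fin 3 → F) →ₗ[F] (Fin 3 → F)) (b t)) = d t • b t from heb t]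
      exact Submodule.span_singleton_smul_eq (IsUnit.mk0 (d t) (hd0 t)) (b t)
    · rw [hg, hvspan i0, map_line, ← hv0def]
      intro heq
      have hmem : (e : (Fin 3 → F) →ₗ[F] (Fin 3 → F)) v0 ∈
          Submodule.span F ({v0} : Set (Fin 3 → F)) := by
        rw [← heq]; exact Submodule.mem_span_singleton_self _
      obtain ⟨t', ht'⟩ := Submodule.mem_span_singleton.mp hmem
      have hev0 : (e : (Fin 3 → F) →ₗ[F] (Fin 3 → F)) v0 = ∑ k, (d k * c k) • b k := by
        rw [hv0sum, map_sum]
        refine Finset.sum_congr rfl fun k _ => ?_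
        rw [LinearMap.map_smul]
        rw [show ((e : (Fin 3 → F) →ₗ[F] (Fin 3 → F)) (b k)) = d k • b k from heb k]
        rw [smul_smul, mul_comm]
      have hrepr1 : ⇑(b.repr ((e : (Fin 3 → F) →ₗ[F] (Fin 3 → F)) v0)) =
          fun k => d k * c k := by
        rw [hev0]; exact b.repr_sum_self _
      have hrepr2 : ⇑(b.repr (t' • v0)) = fun k => t' * c k := by
        rw [show t' • v0 = ∑ k, (t' * c k) • b k by
          rw [hv0sum, Finset.smul_sum]
          exact Finset.sum_congr rfl fun k _ => by rw [smul_smul]]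
        exact b.repr_sum_self _
      have hfun : (fun k => d k * c k) = fun k => t' * c k := by
        rw [← hrepr1, ← hrepr2, ht']
      have hati : d i * c i = t' * c i := congrFun hfun i
      have hatj : d j * c j = t' * c j := congrFun hfun j
      have hdi : d i = a := by simp [hddef]
      have hdj : d j = 1 := by simp [hddef, hij.symm]
      rw [hdi] at hati
      rw [hdj, one_mul] at hatj
      have ht1 : t' = 1 := by
        have h1 : t' * c j = 1 * c j := by rw [one_mul, ← hatj]
        exact mul_right_cancel₀ hcj h1
      have hta : a = t' := mul_right_cancel₀ hci hati
      exact ha1 (by rw [hta, ht1])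
  · -- Case B: the other three lines lie in a common plane
    have hLne : ∀ s t : Fin 3, s ≠ t → L (m s) ≠ L (m t) := by
      intro s t hst h
      exact hst (Fin.succAbove_right_injective (hdist h))
    have hw01 : LinearIndependent F ![w 0, w 1] := by
      rw [LinearIndependent.pair_iff]
      intro s t hst
      by_cases ht : t = 0
      · subst ht
        simp at hst
        rcases hst with h | h
        · exact ⟨h, rfl⟩
        · exact absurd h (hw0 0)
      · exfalso
        have hw1mem : w 1 ∈ Submodule.span F ({w 0} : Set (Fin 3 → F)) := by
          rw [Submodule.mem_span_singleton]
          refine ⟨-(t⁻¹ * s), ?_⟩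
          have : t • w 1 = -(s • w 0) := by
            rw [eq_neg_iff_add_eq_zero, add_comm]; exact hst
          calc -(t⁻¹ * s) • w 0 = -(t⁻¹ • (s • w 0)) := by rw [smul_smul, neg_smul]
            _ = t⁻¹ • (t • w 1) := by rw [this, smul_neg]
            _ = w 1 := by rw [smul_smul, inv_mul_cancel₀ ht, one_smul]
        exact notMem_of_span_ne (hw0 1)
          (hspan_ne (m 1) (m 0) (hLne 1 0 (by decide))) hw1mem
    have hw2 : w 2 ∈ Submodule.span F ({w 0, w 1} : Set (Fin 3 → F)) := by
      by_contra hw2'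
      apply hind
      have : w = Fin.snoc ![w 0, w 1] (w 2) := by
        funext k
        fin_cases k <;> rfl
      rw [this]
      refine linearIndependent_fin_snoc.mpr ⟨hw01, ?_⟩
      have hrange : Set.range ![w 0, w 1] = {w 0, w 1} := by
        ext x; simp [Fin.exists_fin_two, or_comm]
      rw [hrange]
      exact hw2'
    set P : Submodule F (Fin 3 → F) := Submodule.span F {w 0, w 1} with hPdef
    have hwP : ∀ t, w t ∈ P := by
      intro t
      fin_cases t
      · exact Submodule.subset_span (by simp)
      · exact Submodule.subset_span (by simp)
      · exact hw2
    have hPrank : Module.finrank F P = 2 := by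
      have h1 : Set.range ![w 0, w 1] = {w 0, w 1} := by
        ext x; simp [Fin.exists_fin_two, or_comm]
      have := finrank_span_eq_card hw01
      rw [h1] at this
      rw [hPdef, this]
      simp
    have hv0P : v0 ∉ P := by
      intro hmem
      apply hplane
      refine ⟨P, hPrank, fun i => ?_⟩
      by_cases hi : i = i0
      · subst hi
        rw [hvspan i, Submodule.span_singleton_le_iff_mem]
        exact hmem
      · obtain ⟨t, ht⟩ := Fin.exists_succAbove_eq hi
        rw [← ht, hvspan, Submodule.span_singleton_le_iff_mem]
        exact hwP t
    -- basis w0, w1, v0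
    have hlin : LinearIndependent F ![w 0, w 1, v0] := by
      have : (![w 0, w 1, v0] : Fin 3 → (Fin 3 → F)) = Fin.snoc ![w 0, w 1] v0 := by
        funext k
        fin_cases k <;> rfl
      rw [this]
      refine linearIndependent_fin_snoc.mpr ⟨hw01, ?_⟩
      have hrange : Set.range ![w 0, w 1] = {w 0, w 1} := by
        ext x; simp [Fin.exists_fin_two, or_comm]
      rw [hrange]
      exact hv0P
    have hcard : Fintype.card (Fin 3) = Module.finrank F (Fin 3 → F) := by
      simp [Module.finrank_fin_fun]
    set b := basisOfLinearIndependentOfCardEqFinrank hlin hcard with hbdef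
    have hb : ⇑b = ![w 0, w 1, v0] := coe_basisOfLinearIndependentOfCardEqFinrank hlin hcard
    set f : (Fin 3 → F) →ₗ[F] (Fin 3 → F) := b.constr F ![w 0, w 1, v0 + w 0] with hfdef
    set finv : (Fin 3 → F) →ₗ[F] (Fin 3 → F) := b.constr F ![w 0, w 1, v0 - w 0] with hfinvdef
    have hb0 : b 0 = w 0 := by rw [hb]; simp
    have hb1 : b 1 = w 1 := by rw [hb]; simp
    have hf0 : f (b 0) = w 0 := by rw [hfdef, Module.Basis.constr_basis]; simp
    have hf1 : f (b 1) = w 1 := by rw [hfdef, Module.Basis.constr_basis]; simp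
    have hf2 : f (b 2) = v0 + w 0 := by rw [hfdef, Module.Basis.constr_basis]; simp
    have hg0 : finv (b 0) = w 0 := by rw [hfinvdef, Module.Basis.constr_basis]; simp
    have hg1 : finv (b 1) = w 1 := by rw [hfinvdef, Module.Basis.constr_basis]; simp
    have hg2 : finv (b 2) = v0 - w 0 := by rw [hfinvdef, Module.Basis.constr_basis]; simp
    have hb2 : b 2 = v0 := by rw [hb]; simp
    have hcomp1 : f ∘ₗ finv = LinearMap.id := by
      apply b.ext
      intro k
      fin_cases k
      · show f (finv (b 0)) = b 0
        rw [hg0, ← hb0, hf0, hb0]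
      · show f (finv (b 1)) = b 1
        rw [hg1, ← hb1, hf1, hb1]
      · show f (finv (b 2)) = b 2
        rw [hg2, show (v0 - w 0 : Fin 3 → F) = b 2 - b 0 by rw [hb2, hb0], map_sub,
          hf2, hf0, hb2]
        abel
    have hcomp2 : finv ∘ₗ f = LinearMap.id := by
      apply b.ext
      intro k
      fin_cases k
      · show finv (f (b 0)) = b 0
        rw [hf0, ← hb0, hg0, hb0]
      · show finv (f (b 1)) = b 1
        rw [hf1, ← hb1, hg1, hb1]
      · show finv (f (b 2)) = b 2
        rw [hf2, show (v0 + w 0 : Fin 3 → F) = b 2 + b 0 by rw [hb2, hb0], map_add,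
          hg2, hg0, hb2]
        abel
    set e : (Fin 3 → F) ≃ₗ[F] (Fin 3 → F) := LinearEquiv.ofLinear f finv hcomp1 hcomp2
      with hedef
    have hecoe : (e : (Fin 3 → F) →ₗ[F] (Fin 3 → F)) = f := by rw [hedef]; rfl
    have hew0 : (e : (Fin 3 → F) →ₗ[F] (Fin 3 → F)) (w 0) = w 0 := by
      rw [hecoe, ← hb0, hf0, hb0]
    have hew1 : (e : (Fin 3 → F) →ₗ[F] (Fin 3 → F)) (w 1) = w 1 := by
      rw [hecoe, ← hb1, hf1, hb1]
    have hev0 : (e : (Fin 3 → F) →ₗ[F] (Fin 3 → F)) v0 = v0 + w 0 := by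
      rw [hecoe, ← hb2, hf2, hb2]
    have heP : ∀ x ∈ P, (e : (Fin 3 → F) →ₗ[F] (Fin 3 → F)) x = x := by
      intro x hx
      induction hx using Submodule.span_induction with
      | mem y hy =>
        rcases hy with h | h
        · rw [h]; exact hew0
        · rw [Set.mem_singleton_iff] at h; rw [h]; exact hew1
      | zero => simp
      | add y z _ _ hy hz => rw [map_add, hy, hz]
      | smul c y _ hy => rw [LinearMap.map_smul, hy]
    obtain ⟨g, hg⟩ := exists_gl e
    refine ⟨g, ?_, ?_⟩
    · rintro U ⟨⟨q, rfl⟩, hne⟩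
      have hqne : L q ≠ L i0 := by simpa using hne
      obtain ⟨t, ht⟩ := Fin.exists_succAbove_eq (fun h => hqne (congrArg L h))
      rw [hg, hvspan q, map_line]
      have hvq : v q = w t := by rw [hwdef]; simp [hmdef, ht]
      rw [hvq, heP (w t) (hwP t)]
    · rw [hg, hvspan i0, map_line, ← hv0def, hev0]
      intro heq
      have hmem : v0 + w 0 ∈ Submodule.span F ({v0} : Set (Fin 3 → F)) := by
        rw [← heq]; exact Submodule.mem_span_singleton_self _
      obtain ⟨t', ht'⟩ := Submodule.mem_span_singleton.mp hmem
      have hw0eq : w 0 = (t' - 1) • v0 := by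
        rw [sub_smul, one_smul, ht']; abel
      by_cases ht1 : t' = 1
      · rw [ht1] at hw0eq; simp at hw0eq
        exact hw0 0 hw0eq
      · apply hv0P
        have : v0 = (t' - 1)⁻¹ • w 0 := by
          rw [hw0eq, smul_smul, inv_mul_cancel₀ (sub_ne_zero.mpr ht1), one_smul]
        rw [this]
        exact Submodule.smul_mem _ _ (hwP 0)
end

section
/- Let v_1, v_2, v_3, v_4 ∈ F^3 be vectors such that every three of them span F^3. Suppose v_1, v_2, v_3 are eigenvectors of a ∈ M_3(F) with eigenvalues α_1, α_2, α_3 respectively, and that the plane F·v_1 + F·v_4 is invariant under a. Then α_2 = α_3. -/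
/-! Write `v₄ = c₁ v₁ + c₂ v₂ + c₃ v₃` in the eigenbasis `v₁, v₂, v₃`. Since `v₁, v₃, v₄` and
`v₁, v₂, v₄` span, `c₂` and `c₃` are nonzero. Invariance of `F v₁ + F v₄` gives
`a v₄ = s v₁ + t v₄`, and comparing the `v₂`- and `v₃`-coordinates of both sides yields
`c₂ α₂ = t c₂` and `c₃ α₃ = t c₃`, so `α₂ = t = α₃`. -/

open Submodule

namespace Module.Basis

variable {ι R M : Type*}

theorem repr_ne_zero_of_span_insert_eq_top [CommRing R] [Nontrivial R] [AddCommGroup M]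
    [Module R M] (b : Basis ι R M) {i : ι} {w : M} {s : Set M}
    (hs : ∀ x ∈ s, b.repr x i = 0) (hspan : span R (insert w s) = ⊤) :
    b.repr w i ≠ 0 := by
  intro hw
  have hker : span R (insert w s) ≤ LinearMap.ker (b.coord i) :=
    span_le.2 <| Set.forall_mem_insert.2 ⟨hw, hs⟩
  rw [hspan] at hker
  simpa using hker (mem_top (x := b i))

theorem repr_apply_eq_mul_of_apply_eq_smul [CommSemiring R] [AddCommMonoid M] [Module R M]
    (b : Basis ι R M) {f : M →ₗ[R] M} {μ : ι → R} (hf : ∀ j, f (b j) = μ j • b j)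
    (w : M) (i : ι) : b.repr (f w) i = μ i * b.repr w i := by
  have hcomp : (b.coord i).comp f = μ i • b.coord i := b.ext fun j => by
    by_cases hij : j = i
    · subst hij; simp [hf]
    · simp [hf, Ne.symm hij]
  exact LinearMap.congr_fun hcomp w

theorem exists_eigenvalue_eq_of_apply_mem_span_pair [CommRing R] [IsDomain R] [AddCommGroup M] [Module R M]
    (b : Basis ι R M) {f : M →ₗ[R] M} {μ : ι → R} (hf : ∀ j, f (b j) = μ j • b j)
    {i₀ : ι} {w : M} (hw : f w ∈ span R {b i₀, w}) :
    ∃ t, ∀ i, i ≠ i₀ → b.repr w i ≠ 0 → μ i = t := by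
  obtain ⟨s, t, hst⟩ := mem_span_pair.1 hw
  refine ⟨t, fun i hi hwi => mul_right_cancel₀ hwi ?_⟩
  have hcoord := congr_arg (fun x => b.repr x i) hst
  simpa [repr_apply_eq_mul_of_apply_eq_smul b hf, hi] using hcoord.symm

end Module.Basis

theorem stmt_17 (F : Type*) [Field F] (v : Fin 4 → (Fin 3 → F))
    (hspan : ∀ i j k : Fin 4, i ≠ j → i ≠ k → j ≠ k →
      Submodule.span F {v i, v j, v k} = ⊤)
    (a : Matrix (Fin 3) (Fin 3) F) (α₁ α₂ α₃ : F)
    (h₁ : a.mulVec (v 0) = α₁ • v 0)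
    (h₂ : a.mulVec (v 1) = α₂ • v 1)
    (h₃ : a.mulVec (v 2) = α₃ • v 2)
    (hinv : (Submodule.span F {v 0, v 3}).map a.mulVecLin ≤
      Submodule.span F {v 0, v 3}) :
    α₂ = α₃ := by
  have hrange : Set.range ![v 0, v 1, v 2] = {v 0, v 1, v 2} := by
    ext; simp [Matrix.range_cons, Matrix.range_empty]; tauto
  let b : Module.Basis (Fin 3) F (Fin 3 → F) := basisOfTopLeSpanOfCardEqFinrank ![v 0, v 1, v 2]
    (by rw [hrange, hspan 0 1 2 (by decide) (by decide) (by decide)]) (by simp)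
  have hb : ⇑b = ![v 0, v 1, v 2] := coe_basisOfTopLeSpanOfCardEqFinrank _ _ _
  have hf : ∀ j, a.mulVecLin (b j) = ![α₁, α₂, α₃] j • b j := by
    intro j; fin_cases j <;> simp [hb, h₁, h₂, h₃]
  have hw : a.mulVecLin (v 3) ∈ span F {b 0, v 3} := by
    simpa [hb] using hinv (mem_map_of_mem (subset_span (by simp)))
  obtain ⟨hr₀, hr₁, hr₂⟩ : b.repr (v 0) = Finsupp.single 0 1 ∧ b.repr (v 1) = Finsupp.single 1 1 ∧
      b.repr (v 2) = Finsupp.single 2 1 := by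
    simp only [← b.repr_self, hb]; simp
  have hc₂ : b.repr (v 3) 1 ≠ 0 := b.repr_ne_zero_of_span_insert_eq_top (s := {v 0, v 2})
    (by simp [hr₀, hr₂]) (by rw [← hspan 0 2 3 (by decide) (by decide) (by decide)]; grind)
  have hc₃ : b.repr (v 3) 2 ≠ 0 := b.repr_ne_zero_of_span_insert_eq_top (s := {v 0, v 1})
    (by simp [hr₀, hr₁]) (by rw [← hspan 0 1 3 (by decide) (by decide) (by decide)]; grind)
  obtain ⟨t, ht⟩ := b.exists_eigenvalue_eq_of_apply_mem_span_pair hf hw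
  simpa using (ht 1 (by decide) hc₂).trans (ht 2 (by decide) hc₃).symm
end

section
/- Suppose |F| > 2. Let S ⊆ Sub(F^3) consist of 3 lines L_1, L_2, L_3 and 2 planes P_1, P_2 with L_1 ⊆ P_1, L_2 ⊆ P_2, L_1 + L_2 + L_3 = F^3, and L_i ⊄ P_j whenever i ≠ j (for i ∈ {1,2,3}, j ∈ {1,2}). Then S is a GL_3(F)-independent set of 5 elements. -/
open Matrix

/-!
Each member of `S` is moved by a dilation `x ↦ x + φ x • v` with `φ v = s ∉ {0, -1}`, which
exists because `|F| > 2`. Such a dilation stabilizes a subspace exactly when the subspace contains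
the centre `v` or lies in the axis `ker φ`. Take a basis `b` with `Lᵢ = ⟨bᵢ⟩`, scaled so that
`b₀ + b₁ + b₂` spans `P₁ ∩ P₂`. The dilation with centre `b₀ + b₁ + b₂` and axis the sum of the
other two lines moves `Lᵢ` alone; the one with centre `b₁` and axis `⟨b₀, b₂⟩` moves `P₁` alone,
and symmetrically for `P₂`. This also shows that the five subspaces are distinct.
-/

open Module Submodule

theorem Cardinal.exists_ne_ne_of_two_lt_mk {α : Type*} (h : 2 < Cardinal.mk α) (a b : α) :
    ∃ c, c ≠ a ∧ c ≠ b := by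
  obtain ⟨c, hc⟩ := Cardinal.exists_notMem_of_length_lt [a, b] (by simpa using h)
  exact ⟨c, by simpa [not_or] using hc⟩

section DivisionRing

variable {K V : Type*} [DivisionRing K] [AddCommGroup V] [Module K V]

theorem Submodule.map_transvection_le_iff {f : Dual K V} {v : V} {U : Submodule K V} :
    U.map (LinearMap.transvection f v) ≤ U ↔ v ∈ U ∨ U ≤ LinearMap.ker f := by
  rw [Submodule.map_le_iff_le_comap]
  simp only [SetLike.le_def, mem_comap, LinearMap.transvection.apply, LinearMap.mem_ker]
  constructor
  · intro h
    by_contra! hne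
    obtain ⟨hv, x, hx, hfx⟩ := hne
    exact hv ((U.smul_mem_iff hfx).1 ((U.add_mem_iff_right hx).1 (h hx)))
  · rintro (hv | hker) x hx
    · exact U.add_mem hx (U.smul_mem _ hv)
    · simp [hker hx, hx]

theorem Submodule.map_eq_of_map_le [FiniteDimensional K V] (e : V ≃ₗ[K] V) {U : Submodule K V}
    (h : U.map (e : V →ₗ[K] V) ≤ U) : U.map (e : V →ₗ[K] V) = U :=
  eq_of_le_of_finrank_eq h (e.finrank_map_eq U)

theorem Submodule.eq_span_singleton_of_finrank_eq_one {L : Submodule K V}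
    (hL : finrank K L = 1) {x : V} (hxL : x ∈ L) (hx : x ≠ 0) : L = span K {x} :=
  (((isAtom_iff_finrank_eq_one.2 hL).le_iff.1 ((span_singleton_le_iff_mem x L).2 hxL)).resolve_left
    (by simpa using hx)).symm

end DivisionRing

theorem Submodule.eq_zero_of_mem_sup_of_mem_inf {R M : Type*} [Ring R] [AddCommGroup M]
    [Module R M] {L L' P P' : Submodule R M} (hLP : L ≤ P) (hL'P : Disjoint L' P)
    (hLP' : Disjoint L P') {x : M} (hx : x ∈ L ⊔ L') (hxP : x ∈ P ⊓ P') : x = 0 := by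
  have hxL : x ∈ L := by
    have : (L ⊔ L') ⊓ P = L := by rw [sup_inf_assoc_of_le _ hLP, hL'P.eq_bot, sup_bot_eq]
    exact this ▸ mem_inf.2 ⟨hx, hxP.1⟩
  exact disjoint_def.1 hLP' x hxL hxP.2

namespace Module.Basis

variable {ι R M : Type*} [DecidableEq ι] [Semiring R] [AddCommMonoid M] [Module R M]
  (b : Basis ι R M)

@[simp]
theorem coord_sum_self [Fintype ι] (i : ι) : b.coord i (∑ j, b j) = 1 := by
  simp [Finsupp.single_apply]

theorem span_singleton_le_ker_coord_iff [Nontrivial R] {i j : ι} :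
    span R {b i} ≤ LinearMap.ker (b.coord j) ↔ i ≠ j := by
  simp [span_singleton_le_iff_mem, Finsupp.single_apply]

theorem sum_notMem_span_singleton [Fintype ι] [Nontrivial ι] [Nontrivial R] (i : ι) :
    ∑ j, b j ∉ span R {b i} := by
  obtain ⟨j, hji⟩ := exists_ne i
  intro h
  simpa using b.span_singleton_le_ker_coord_iff.2 hji.symm h

end Module.Basis

theorem exists_basis_of_lines_of_planes {K M : Type*} [DivisionRing K] [AddCommGroup M]
    [Module K M] [FiniteDimensional K M] (hM : finrank K M = 3)
    {L₁ L₂ L₃ P₁ P₂ : Submodule K M}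
    (hL₁ : finrank K L₁ = 1) (hL₂ : finrank K L₂ = 1) (hL₃ : finrank K L₃ = 1)
    (hP₁ : finrank K P₁ = 2) (hP₂ : finrank K P₂ = 2)
    (h₁ : L₁ ≤ P₁) (h₂ : L₂ ≤ P₂) (hspan : L₁ ⊔ L₂ ⊔ L₃ = ⊤)
    (h₁₂ : ¬ L₁ ≤ P₂) (h₂₁ : ¬ L₂ ≤ P₁) (h₃₁ : ¬ L₃ ≤ P₁) (h₃₂ : ¬ L₃ ≤ P₂) :
    ∃ b : Basis (Fin 3) K M,
      L₁ = span K {b 0} ∧ L₂ = span K {b 1} ∧ L₃ = span K {b 2} ∧ ∑ i, b i ∈ P₁ ⊓ P₂ := by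
  have disj {L P : Submodule K M} (hL : finrank K L = 1) (h : ¬ L ≤ P) : Disjoint L P :=
    (isAtom_iff_finrank_eq_one.2 hL).not_le_iff_disjoint.1 h
  obtain ⟨x, hxP, hx0⟩ : ∃ x ∈ P₁ ⊓ P₂, x ≠ 0 := by
    refine exists_mem_ne_zero_of_ne_bot fun h => ?_
    have := finrank_add_finrank_le_of_disjoint (disjoint_iff.2 h)
    omega
  -- the components of `x` in the three lines are all nonzero, so they form the basis
  obtain ⟨x₁₂, hx₁₂, x₃, hx₃, rfl⟩ := mem_sup.1 (hspan ▸ mem_top : x ∈ L₁ ⊔ L₂ ⊔ L₃)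
  obtain ⟨x₁, hx₁, x₂, hx₂, rfl⟩ := mem_sup.1 hx₁₂
  have hx₁0 : x₁ ≠ 0 := by
    rintro rfl
    refine hx0 (eq_zero_of_mem_sup_of_mem_inf h₂ (disj hL₃ h₃₂) (disj hL₂ h₂₁) ?_
      (inf_comm P₁ P₂ ▸ hxP))
    rw [zero_add]
    exact add_mem_sup hx₂ hx₃
  have hx₂0 : x₂ ≠ 0 := by
    rintro rfl
    refine hx0 (eq_zero_of_mem_sup_of_mem_inf h₁ (disj hL₃ h₃₁) (disj hL₁ h₁₂) ?_ hxP)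
    rw [add_zero]
    exact add_mem_sup hx₁ hx₃
  have hx₃0 : x₃ ≠ 0 := by
    rintro rfl
    rw [add_zero] at hx0 hxP
    exact hx0 (eq_zero_of_mem_sup_of_mem_inf h₁ (disj hL₂ h₂₁) (disj hL₁ h₁₂) hx₁₂ hxP)
  have hL₁x := eq_span_singleton_of_finrank_eq_one hL₁ hx₁ hx₁0
  have hL₂x := eq_span_singleton_of_finrank_eq_one hL₂ hx₂ hx₂0
  have hL₃x := eq_span_singleton_of_finrank_eq_one hL₃ hx₃ hx₃0
  have hle : ⊤ ≤ span K (Set.range ![x₁, x₂, x₃]) := by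
    rw [← hspan, hL₁x, hL₂x, hL₃x]
    simp only [Matrix.range_cons, Matrix.range_empty, Set.union_empty, span_union, sup_assoc,
      le_refl]
  let b := basisOfTopLeSpanOfCardEqFinrank _ hle (by simp [hM])
  have hb : ⇑b = ![x₁, x₂, x₃] := coe_basisOfTopLeSpanOfCardEqFinrank _ hle _
  refine ⟨b, ?_, ?_, ?_, ?_⟩
  all_goals simpa [hb, Fin.sum_univ_three]

theorem Matrix.GeneralLinearGroup.exists_mulVecLin_eq {F : Type*} [Field F] {n : ℕ}
    (e : (Fin n → F) ≃ₗ[F] (Fin n → F)) :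
    ∃ g : GL (Fin n) F, (g : Matrix (Fin n) (Fin n) F).mulVecLin = e :=
  ⟨toLin.symm ((LinearMap.GeneralLinearGroup.generalLinearEquiv F _).symm e), by
    rw [← coe_toLin, MulEquiv.apply_symm_apply]; rfl⟩

/-- `v i` and `ker (f i)` are the centre and the axis of a dilation moving `Φ i` alone. -/
theorem glIndep_range_of_dilations {F ι : Type*} [Field F] {n : ℕ}
    (Φ : ι → Submodule F (Fin n → F)) (f : ι → Dual F (Fin n → F)) (v : ι → Fin n → F)
    (hfv : ∀ i, f i (v i) = 1) {s : F} (hs₀ : s ≠ 0) (hs₁ : s ≠ -1)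
    (hstable : ∀ i j, (v i ∈ Φ j ∨ Φ j ≤ LinearMap.ker (f i)) ↔ i ≠ j) :
    Function.Injective Φ ∧ glIndep (Set.range Φ) := by
  have hmap (i : ι) (U : Submodule F (Fin n → F)) :
      U.map (LinearMap.transvection (f i) (s • v i)) ≤ U ↔
        v i ∈ U ∨ U ≤ LinearMap.ker (f i) := by
    rw [map_transvection_le_iff, smul_mem_iff _ hs₀]
  refine ⟨fun i j hij => by_contra fun hne => (hstable i i).1 (hij ▸ (hstable i j).2 hne) rfl, ?_⟩
  rintro _ ⟨i, rfl⟩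
  have hunit : IsUnit (1 + f i (s • v i)) := by
    rw [map_smul, hfv, smul_eq_mul, mul_one]
    exact Ne.isUnit fun h => hs₁ (eq_neg_of_add_eq_zero_right h)
  obtain ⟨g, hg⟩ := GeneralLinearGroup.exists_mulVecLin_eq (LinearEquiv.dilatransvection hunit)
  refine ⟨g, ?_, fun h => ?_⟩
  · rintro _ ⟨⟨j, rfl⟩, hji⟩
    rw [hg]
    refine map_eq_of_map_le _ ((hmap i _).2 ((hstable i j).2 ?_))
    rintro rfl
    exact hji rfl
  · rw [hg] at h
    exact (hstable i i).1 ((hmap i _).1 h.le) rfl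

theorem stmt_18 (F : Type*) [Field F] (hF : (2 : Cardinal) < Cardinal.mk F)
    (L₁ L₂ L₃ P₁ P₂ : Submodule F (Fin 3 → F))
    (hL : Module.finrank F L₁ = 1 ∧ Module.finrank F L₂ = 1 ∧ Module.finrank F L₃ = 1)
    (hP : Module.finrank F P₁ = 2 ∧ Module.finrank F P₂ = 2)
    (h₁ : L₁ ≤ P₁) (h₂ : L₂ ≤ P₂)
    (hspan : L₁ ⊔ L₂ ⊔ L₃ = ⊤)
    (h₁₂ : ¬ L₁ ≤ P₂) (h₂₁ : ¬ L₂ ≤ P₁)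
    (h₃₁ : ¬ L₃ ≤ P₁) (h₃₂ : ¬ L₃ ≤ P₂) :
    glIndep {L₁, L₂, L₃, P₁, P₂} ∧ ({L₁, L₂, L₃, P₁, P₂} : Set (Submodule F (Fin 3 → F))).ncard = 5 := by
  obtain ⟨s, hs₀, hs₁⟩ := Cardinal.exists_ne_ne_of_two_lt_mk hF 0 (-1)
  obtain ⟨b, rfl, rfl, rfl, hx⟩ := exists_basis_of_lines_of_planes (finrank_fin_fun F)
    hL.1 hL.2.1 hL.2.2 hP.1 hP.2 h₁ h₂ hspan h₁₂ h₂₁ h₃₁ h₃₂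
  rw [span_singleton_le_iff_mem] at h₁ h₂ h₁₂ h₂₁
  obtain ⟨hxP₁, hxP₂⟩ := mem_inf.1 hx
  have hP₁ker : ¬ P₁ ≤ LinearMap.ker (b.coord 1) := fun h => by simpa using h hxP₁
  have hP₂ker : ¬ P₂ ≤ LinearMap.ker (b.coord 0) := fun h => by simpa using h hxP₂
  obtain ⟨hinj, hindep⟩ := glIndep_range_of_dilations
    ![span F {b 0}, span F {b 1}, span F {b 2}, P₁, P₂]
    ![b.coord 0, b.coord 1, b.coord 2, b.coord 1, b.coord 0]
    ![∑ i, b i, ∑ i, b i, ∑ i, b i, b 1, b 0]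
    (by intro i; fin_cases i <;> simp) hs₀ hs₁ (by
      intro i j
      fin_cases i <;> fin_cases j <;>
        simp [hxP₁, hxP₂, h₁, h₂, h₁₂, h₂₁, hP₁ker, hP₂ker, b.span_singleton_le_ker_coord_iff,
          b.sum_notMem_span_singleton])
  have hrange : Set.range ![span F {b 0}, span F {b 1}, span F {b 2}, P₁, P₂] =
      {span F {b 0}, span F {b 1}, span F {b 2}, P₁, P₂} := by
    simp only [Matrix.range_cons, Matrix.range_empty, Set.union_empty, Set.singleton_union]
  rw [← hrange]
  exact ⟨hindep, (Set.ncard_range_of_injective hinj).trans (by simp)⟩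
end

section
/- For every α ∈ F, the set S_α = {e_{11}+e_{12}, e_{21}+e_{22}, e_{22}+e_{23}, e_{32}+e_{33}, e_{11}+α·e_{33}} of 3×3 matrices is an irredundant generating set for M_3(F): it generates M_3(F) as a unital F-algebra and no proper subset does. -/
/-!
Products and differences of the generators produce every matrix unit `e_ij`, so `S_α` generates
`M_3(F)`. For irredundancy, each generator is separated from the other four by the proper
subalgebra of matrices sharing a fixed eigenvector: `e_1` on the left for `e_11 + e_12`, `e_1` on
the right for `e_21 + e_22`, `e_3` on the right for `e_22 + e_23`, `e_3` on the left for
`e_32 + e_33`, and, for `e_11 + α e_33`, the vector `(1, -1, 1)` on the right, which the other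
four generators annihilate.
-/

open Matrix

namespace Matrix

variable {n R : Type*} [Fintype n] [DecidableEq n] [CommSemiring R]

theorem subalgebra_eq_top_of_single_mem {A : Subalgebra R (Matrix n n R)}
    (h : ∀ i j, single i j (1 : R) ∈ A) : A = ⊤ := by
  refine eq_top_iff.2 fun M _ => ?_
  rw [matrix_eq_sum_single M]
  refine Subalgebra.sum_mem _ fun i _ => Subalgebra.sum_mem _ fun j _ => ?_
  simpa [smul_single] using A.smul_mem (h i j) (M i j)

def rightEigenSubalgebra (v : n → R) : Subalgebra R (Matrix n n R) where
  carrier := {M | ∃ c : R, M *ᵥ v = c • v}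
  mul_mem' := by
    rintro M N ⟨c, hc⟩ ⟨d, hd⟩
    exact ⟨d * c, by rw [← mulVec_mulVec, hd, mulVec_smul, hc, smul_smul]⟩
  add_mem' := by
    rintro M N ⟨c, hc⟩ ⟨d, hd⟩
    exact ⟨c + d, by rw [add_mulVec, hc, hd, add_smul]⟩
  algebraMap_mem' r := ⟨r, by rw [Algebra.algebraMap_eq_smul_one, smul_mulVec, one_mulVec]⟩

def leftEigenSubalgebra (v : n → R) : Subalgebra R (Matrix n n R) where
  carrier := {M | ∃ c : R, v ᵥ* M = c • v}
  mul_mem' := by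
    rintro M N ⟨c, hc⟩ ⟨d, hd⟩
    exact ⟨c * d, by rw [← vecMul_vecMul, hc, smul_vecMul, hd, smul_smul]⟩
  add_mem' := by
    rintro M N ⟨c, hc⟩ ⟨d, hd⟩
    exact ⟨c + d, by rw [vecMul_add, hc, hd, add_smul]⟩
  algebraMap_mem' r := ⟨r, by rw [Algebra.algebraMap_eq_smul_one, vecMul_smul, vecMul_one]⟩

theorem mem_rightEigenSubalgebra {v : n → R} {M : Matrix n n R} :
    M ∈ rightEigenSubalgebra v ↔ ∃ c : R, M *ᵥ v = c • v := Iff.rfl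

theorem mem_leftEigenSubalgebra_iff_transpose_mem {v : n → R} {M : Matrix n n R} :
    M ∈ leftEigenSubalgebra v ↔ Mᵀ ∈ rightEigenSubalgebra v := by
  rw [mem_rightEigenSubalgebra, mulVec_transpose]
  rfl

theorem mem_rightEigenSubalgebra_single_iff {i : n} {M : Matrix n n R} :
    M ∈ rightEigenSubalgebra (Pi.single i 1) ↔ ∀ j ≠ i, M j i = 0 := by
  simp only [mem_rightEigenSubalgebra, mulVec_single_one, funext_iff, Pi.smul_apply,
    Pi.single_apply]
  constructor
  · rintro ⟨c, hc⟩ j hj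
    simpa [hj] using hc j
  · intro h
    refine ⟨M i i, fun j => ?_⟩
    by_cases hj : j = i
    · simp [hj]
    · simp [hj, h j hj]

theorem mem_leftEigenSubalgebra_single_iff {i : n} {M : Matrix n n R} :
    M ∈ leftEigenSubalgebra (Pi.single i 1) ↔ ∀ j ≠ i, M i j = 0 := by
  rw [mem_leftEigenSubalgebra_iff_transpose_mem, mem_rightEigenSubalgebra_single_iff]
  rfl

theorem mem_rightEigenSubalgebra_of_mulVec_eq_zero {v : n → R} {M : Matrix n n R}
    (h : M *ᵥ v = 0) : M ∈ rightEigenSubalgebra v :=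
  ⟨0, by rw [h, zero_smul]⟩

variable [NoZeroDivisors R] {v : n → R} {i j : n}

theorem single_notMem_rightEigenSubalgebra (hv : v i ≠ 0) (hij : j ≠ i) :
    single j i 1 ∉ rightEigenSubalgebra v := by
  rintro ⟨c, hc⟩
  rw [single_mulVec_eq, one_mul] at hc
  have hc0 : c = 0 := by simpa [hij.symm, hv] using congrFun hc i
  simpa [hc0, hv] using congrFun hc j

theorem rightEigenSubalgebra_ne_top (hv : v i ≠ 0) (hij : j ≠ i) :
    rightEigenSubalgebra v ≠ ⊤ :=
  fun h => single_notMem_rightEigenSubalgebra hv hij (h ▸ Algebra.mem_top)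

theorem leftEigenSubalgebra_ne_top (hv : v i ≠ 0) (hij : j ≠ i) :
    leftEigenSubalgebra v ≠ ⊤ := by
  intro h
  have hmem : (single j i (1 : R))ᵀ ∈ leftEigenSubalgebra v := h ▸ Algebra.mem_top
  rw [mem_leftEigenSubalgebra_iff_transpose_mem, transpose_transpose] at hmem
  exact single_notMem_rightEigenSubalgebra hv hij hmem

end Matrix

theorem Algebra.adjoin_ne_top_of_ssubset {R A : Type*} [CommSemiring R] [Semiring A]
    [Algebra R A] {S T : Set A} (hT : T ⊂ S)
    (h : ∀ x ∈ S, ∃ K : Subalgebra R A, K ≠ ⊤ ∧ S \ {x} ⊆ K) : adjoin R T ≠ ⊤ := by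
  obtain ⟨x, hxS, hxT⟩ := Set.exists_of_ssubset hT
  obtain ⟨K, hK, hSK⟩ := h x hxS
  exact ne_top_of_le_ne_top hK (adjoin_le ((Set.subset_sdiff_singleton hT.subset hxT).trans hSK))

section

variable {F : Type*} [Field F]

def generators (α : F) : Set (Matrix (Fin 3) (Fin 3) F) :=
  {!![1,1,0;0,0,0;0,0,0], !![0,0,0;1,1,0;0,0,0], !![0,0,0;0,1,1;0,0,0],
    !![0,0,0;0,0,0;0,1,1], !![1,0,0;0,0,0;0,0,α]}

theorem generators_eq_single (α : F) : generators α =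
    {single 0 0 1 + single 0 1 1, single 1 0 1 + single 1 1 1, single 1 1 1 + single 1 2 1,
      single 2 1 1 + single 2 2 1, single 0 0 1 + α • single 2 2 1} := by
  simp only [generators]
  congr <;> ext i j <;> fin_cases i <;> fin_cases j <;> simp

theorem adjoin_generators_eq_top (α : F) : Algebra.adjoin F (generators α) = ⊤ := by
  set A := Algebra.adjoin F (generators α)
  have mem : ∀ M ∈ generators α, M ∈ A := fun _ h => Algebra.subset_adjoin h
  simp only [generators_eq_single, Set.forall_mem_insert, Set.mem_singleton_iff, forall_eq] at mem
  obtain ⟨hA, hB, hC, hD, hE⟩ := mem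
  have h00 : single 0 0 1 ∈ A := by
    simpa [add_mul, mul_add, single_mul_single_same, single_mul_single_of_ne] using mul_mem hA hE
  have h01 : single 0 1 1 ∈ A := by simpa using sub_mem hA h00
  have h10 : single 1 0 1 ∈ A := by
    simpa [add_mul, single_mul_single_same, single_mul_single_of_ne] using mul_mem hB h00
  have h11 : single 1 1 1 ∈ A := by simpa using sub_mem hB h10
  have h12 : single 1 2 1 ∈ A := by simpa using sub_mem hC h11
  have h21 : single 2 1 1 ∈ A := by
    simpa [add_mul, single_mul_single_same, single_mul_single_of_ne] using mul_mem hD h11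
  have h22 : single 2 2 1 ∈ A := by simpa using sub_mem hD h21
  have h02 : single 0 2 1 ∈ A := by simpa [single_mul_single_same] using mul_mem h01 h12
  have h20 : single 2 0 1 ∈ A := by simpa [single_mul_single_same] using mul_mem h21 h10
  refine subalgebra_eq_top_of_single_mem fun i j => ?_
  fin_cases i <;> fin_cases j <;> assumption

theorem adjoin_ne_top_of_ssubset_generators (α : F) {T : Set (Matrix (Fin 3) (Fin 3) F)}
    (hT : T ⊂ generators α) : Algebra.adjoin F T ≠ ⊤ := by
  refine Algebra.adjoin_ne_top_of_ssubset hT fun x hx => ?_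
  simp only [generators, Set.mem_insert_iff, Set.mem_singleton_iff] at hx
  rcases hx with rfl | rfl | rfl | rfl | rfl
  · refine ⟨leftEigenSubalgebra (Pi.single 0 1),
      leftEigenSubalgebra_ne_top (i := 0) (j := 1) (by simp) (by decide), ?_⟩
    simp [generators, Set.subset_def, mem_leftEigenSubalgebra_single_iff, Fin.forall_fin_succ]
  · refine ⟨rightEigenSubalgebra (Pi.single 0 1),
      rightEigenSubalgebra_ne_top (i := 0) (j := 1) (by simp) (by decide), ?_⟩
    simp [generators, Set.subset_def, mem_rightEigenSubalgebra_single_iff, Fin.forall_fin_succ]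
  · refine ⟨rightEigenSubalgebra (Pi.single 2 1),
      rightEigenSubalgebra_ne_top (i := 2) (j := 1) (by simp) (by decide), ?_⟩
    simp [generators, Set.subset_def, mem_rightEigenSubalgebra_single_iff, Fin.forall_fin_succ]
  · refine ⟨leftEigenSubalgebra (Pi.single 2 1),
      leftEigenSubalgebra_ne_top (i := 2) (j := 1) (by simp) (by decide), ?_⟩
    simp [generators, Set.subset_def, mem_leftEigenSubalgebra_single_iff, Fin.forall_fin_succ]
  · refine ⟨rightEigenSubalgebra ![1, -1, 1],
      rightEigenSubalgebra_ne_top (i := 0) (j := 1) (by simp) (by decide), ?_⟩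
    simp only [generators, Set.sdiff_singleton_subset_iff, Set.insert_subset_iff,
      Set.singleton_subset_iff]
    refine ⟨.inr ?_, .inr ?_, .inr ?_, .inr ?_, .inl rfl⟩ <;>
      refine mem_rightEigenSubalgebra_of_mulVec_eq_zero ?_ <;>
      ext i <;> fin_cases i <;> simp [mulVec, dotProduct, Fin.sum_univ_three]

end

theorem stmt_19 (F : Type*) [Field F] (α : F) :
    Algebra.adjoin F
      ({!![1,1,0;0,0,0;0,0,0], !![0,0,0;1,1,0;0,0,0], !![0,0,0;0,1,1;0,0,0],
        !![0,0,0;0,0,0;0,1,1], !![1,0,0;0,0,0;0,0,α]} :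
        Set (Matrix (Fin 3) (Fin 3) F)) = ⊤ ∧
    ∀ T ⊂ ({!![1,1,0;0,0,0;0,0,0], !![0,0,0;1,1,0;0,0,0], !![0,0,0;0,1,1;0,0,0],
        !![0,0,0;0,0,0;0,1,1], !![1,0,0;0,0,0;0,0,α]} :
        Set (Matrix (Fin 3) (Fin 3) F)),
      Algebra.adjoin F T ≠ ⊤ :=
  ⟨adjoin_generators_eq_top α, fun _ hT => adjoin_ne_top_of_ssubset_generators α hT⟩
end
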